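/- arXiv:2506.05778 — 7 statements merged into one kernel-verified Lean document; each statement's English description precedes it below -/
import Mathlib

section
/- For n = 4, the group Γ̂_4^4 is isomorphic to the free group of rank 3 (it is freely generated by the three generators (1234), (1324), (1243)). -/
set_option maxRecDepth 20000

/-- Ordered quadruples of elements of `Fin n`, used to index the generators `(ijkl)`. -/
abbrev Quad (n : ℕ) : Type := Fin n × Fin n × Fin n × Fin n

/-- The underlying set `{i, j, k, l}` of a quadruple `(i, j, k, l)`. -/
def qFinset {n : ℕ} (q : Quad n) : Finset (Fin n) := {q.1, q.2.1, q.2.2.1, q.2.2.2}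

/-- The four entries of the quadruple are pairwise distinct. -/
def qDistinct {n : ℕ} (q : Quad n) : Prop := (qFinset q).card = 4

/-- The defining relators of the group `Γ̂_n^4` of Kim–Manturov:
generators indexed by quadruples of distinct elements (non-distinct quadruples are killed),
commutativity relations (2), signed pentagon relations (3') and signed dihedral
relations (4'). -/
def gammaHatRels (n : ℕ) : Set (FreeGroup (Quad n)) :=
  {w | ∃ q : Quad n, ¬ qDistinct q ∧ w = FreeGroup.of q} ∪
  {w | ∃ q r : Quad n, qDistinct q ∧ qDistinct r ∧ (qFinset q ∩ qFinset r).card ≤ 2 ∧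
      w = FreeGroup.of q * FreeGroup.of r * (FreeGroup.of q)⁻¹ * (FreeGroup.of r)⁻¹} ∪
  {w | ∃ i j k l m : Fin n, ({i, j, k, l, m} : Finset (Fin n)).card = 5 ∧
      w = FreeGroup.of (i, j, k, l) * FreeGroup.of (i, j, l, m) * FreeGroup.of (j, k, l, m) *
        (FreeGroup.of (i, j, k, m))⁻¹ * (FreeGroup.of (i, k, l, m))⁻¹} ∪
  {w | ∃ i j k l : Fin n, qDistinct (i, j, k, l) ∧
      (w = FreeGroup.of (i, j, k, l) * FreeGroup.of (j, k, l, i) ∨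
       w = FreeGroup.of (i, j, k, l) * FreeGroup.of (l, k, j, i))}

/-- The group `Γ̂_n^4` of Kim–Manturov. -/
abbrev GammaHat (n : ℕ) : Type := PresentedGroup (gammaHatRels n)

/-- The generator `(ijkl)` of `Γ̂_n^4`. -/
def gh {n : ℕ} (q : Quad n) : GammaHat n := PresentedGroup.of q

namespace GammaFourAux

instance {n : ℕ} : DecidablePred (qDistinct (n := n)) :=
  fun q => inferInstanceAs (Decidable ((qFinset q).card = 4))

/-- Table assigning to each distinct quadruple its orbit class and sign. -/
def gTable : List (Quad 4 × (Fin 3 × Bool)) :=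
  [((0,1,2,3),(0,true)), ((2,3,0,1),(0,true)), ((0,3,2,1),(0,true)), ((2,1,0,3),(0,true)),
   ((1,2,3,0),(0,false)), ((3,0,1,2),(0,false)), ((3,2,1,0),(0,false)), ((1,0,3,2),(0,false)),
   ((0,2,1,3),(1,true)), ((1,3,0,2),(1,true)), ((0,3,1,2),(1,true)), ((1,2,0,3),(1,true)),
   ((2,1,3,0),(1,false)), ((3,0,2,1),(1,false)), ((3,1,2,0),(1,false)), ((2,0,3,1),(1,false)),
   ((0,1,3,2),(2,true)), ((3,2,0,1),(2,true)), ((0,2,3,1),(2,true)), ((3,1,0,2),(2,true)),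
   ((1,3,2,0),(2,false)), ((2,0,1,3),(2,false)), ((2,3,1,0),(2,false)), ((1,0,2,3),(2,false))]

def g (q : Quad 4) : Option (Fin 3 × Bool) := gTable.lookup q

def rep : Fin 3 → Quad 4
  | 0 => (0,1,2,3)
  | 1 => (0,2,1,3)
  | 2 => (0,1,3,2)

def f (q : Quad 4) : FreeGroup (Fin 3) :=
  match g q with
  | none => 1
  | some (c, true) => FreeGroup.of c
  | some (c, false) => (FreeGroup.of c)⁻¹

lemma F1 : ∀ q : Quad 4, ¬ qDistinct q → g q = none := by decide
lemma F2 : ∀ i j k l : Fin 4,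
    g (j,k,l,i) = Option.map (fun p => (p.1, !p.2)) (g (i,j,k,l)) := by decide
lemma F3 : ∀ i j k l : Fin 4,
    g (l,k,j,i) = Option.map (fun p => (p.1, !p.2)) (g (i,j,k,l)) := by decide
lemma VU : ∀ q : Quad 4, qDistinct q → qFinset q = Finset.univ := by decide

def L24 : List (Quad 4) :=
  [(0,1,2,3), (2,3,0,1), (0,3,2,1), (2,1,0,3),
   (1,2,3,0), (3,0,1,2), (3,2,1,0), (1,0,3,2),
   (0,2,1,3), (1,3,0,2), (0,3,1,2), (1,2,0,3),
   (2,1,3,0), (3,0,2,1), (3,1,2,0), (2,0,3,1),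
   (0,1,3,2), (3,2,0,1), (0,2,3,1), (3,1,0,2),
   (1,3,2,0), (2,0,1,3), (2,3,1,0), (1,0,2,3)]

lemma mem24 : ∀ q : Quad 4, qDistinct q → q ∈ L24 := by decide

lemma f_mul_neg (q q' : Quad 4)
    (h : g q' = Option.map (fun p => (p.1, !p.2)) (g q)) : f q * f q' = 1 := by
  unfold f
  rw [h]
  cases hq : g q with
  | none => simp
  | some p =>
    obtain ⟨c, b⟩ := p
    cases b <;> simp

lemma hrels : ∀ r ∈ gammaHatRels 4, FreeGroup.lift f r = 1 := by
  intro r hr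
  rcases hr with ((h | h) | h) | h
  · obtain ⟨q, hq, rfl⟩ := h
    rw [FreeGroup.lift_apply_of]
    unfold f
    rw [F1 q hq]
  · obtain ⟨q, q', hq, hq', hcard, rfl⟩ := h
    rw [VU q hq, VU q' hq'] at hcard
    simp [Finset.card_univ] at hcard
  · obtain ⟨i, j, k, l, m, hc, rfl⟩ := h
    have h5 := Finset.card_le_univ ({i,j,k,l,m} : Finset (Fin 4))
    rw [hc, Fintype.card_fin] at h5
    omega
  · obtain ⟨i, j, k, l, hd, hw | hw⟩ := h <;> subst hw <;>
      simp only [map_mul, FreeGroup.lift_apply_of]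
    · exact f_mul_neg _ _ (F2 i j k l)
    · exact f_mul_neg _ _ (F3 i j k l)

lemma rel_one {w : FreeGroup (Quad 4)} (h : w ∈ gammaHatRels 4) :
    PresentedGroup.mk (gammaHatRels 4) w = 1 :=
  (QuotientGroup.eq_one_iff _).mpr (Subgroup.subset_normalClosure h)

lemma gh_kill {q : Quad 4} (h : ¬ qDistinct q) : gh q = 1 :=
  rel_one (Or.inl (Or.inl (Or.inl ⟨q, h, rfl⟩)))

lemma gh_shift (i j k l : Fin 4) (h : qDistinct (i,j,k,l)) :
    gh (j,k,l,i) = (gh (i,j,k,l))⁻¹ := by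
  have h1 : gh (i,j,k,l) * gh (j,k,l,i) = 1 := by
    have := rel_one (Or.inr ⟨i, j, k, l, h, Or.inl rfl⟩)
    rwa [map_mul] at this
  exact (inv_eq_of_mul_eq_one_right h1).symm

lemma gh_rev (i j k l : Fin 4) (h : qDistinct (i,j,k,l)) :
    gh (l,k,j,i) = (gh (i,j,k,l))⁻¹ := by
  have h1 : gh (i,j,k,l) * gh (l,k,j,i) = 1 := by
    have := rel_one (Or.inr ⟨i, j, k, l, h, Or.inr rfl⟩)
    rwa [map_mul] at this
  exact (inv_eq_of_mul_eq_one_right h1).symm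

-- orbit equalities, class 0 (a = gh (0,1,2,3))
lemma e0a : gh ((1:Fin 4),2,3,0) = (gh (0,1,2,3))⁻¹ := gh_shift 0 1 2 3 (by decide)
lemma e0b : gh ((2:Fin 4),3,0,1) = gh (0,1,2,3) := by
  rw [gh_shift 1 2 3 0 (by decide), e0a, inv_inv]
lemma e0c : gh ((3:Fin 4),0,1,2) = (gh (0,1,2,3))⁻¹ := by
  rw [gh_shift 2 3 0 1 (by decide), e0b]
lemma e0d : gh ((3:Fin 4),2,1,0) = (gh (0,1,2,3))⁻¹ := gh_rev 0 1 2 3 (by decide)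
lemma e0e : gh ((0:Fin 4),3,2,1) = gh (0,1,2,3) := by
  rw [gh_rev 1 2 3 0 (by decide), e0a, inv_inv]
lemma e0f : gh ((2:Fin 4),1,0,3) = gh (0,1,2,3) := by
  rw [gh_rev 3 0 1 2 (by decide), e0c, inv_inv]
lemma e0g : gh ((1:Fin 4),0,3,2) = (gh (0,1,2,3))⁻¹ := by
  rw [gh_rev 2 3 0 1 (by decide), e0b]

-- class 1 (b = gh (0,2,1,3))
lemma e1a : gh ((2:Fin 4),1,3,0) = (gh (0,2,1,3))⁻¹ := gh_shift 0 2 1 3 (by decide)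
lemma e1b : gh ((1:Fin 4),3,0,2) = gh (0,2,1,3) := by
  rw [gh_shift 2 1 3 0 (by decide), e1a, inv_inv]
lemma e1c : gh ((3:Fin 4),0,2,1) = (gh (0,2,1,3))⁻¹ := by
  rw [gh_shift 1 3 0 2 (by decide), e1b]
lemma e1d : gh ((3:Fin 4),1,2,0) = (gh (0,2,1,3))⁻¹ := gh_rev 0 2 1 3 (by decide)
lemma e1e : gh ((0:Fin 4),3,1,2) = gh (0,2,1,3) := by
  rw [gh_rev 2 1 3 0 (by decide), e1a, inv_inv]
lemma e1f : gh ((1:Fin 4),2,0,3) = gh (0,2,1,3) := by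
  rw [gh_rev 3 0 2 1 (by decide), e1c, inv_inv]
lemma e1g : gh ((2:Fin 4),0,3,1) = (gh (0,2,1,3))⁻¹ := by
  rw [gh_rev 1 3 0 2 (by decide), e1b]

-- class 2 (c = gh (0,1,3,2))
lemma e2a : gh ((1:Fin 4),3,2,0) = (gh (0,1,3,2))⁻¹ := gh_shift 0 1 3 2 (by decide)
lemma e2b : gh ((3:Fin 4),2,0,1) = gh (0,1,3,2) := by
  rw [gh_shift 1 3 2 0 (by decide), e2a, inv_inv]
lemma e2c : gh ((2:Fin 4),0,1,3) = (gh (0,1,3,2))⁻¹ := by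
  rw [gh_shift 3 2 0 1 (by decide), e2b]
lemma e2d : gh ((2:Fin 4),3,1,0) = (gh (0,1,3,2))⁻¹ := gh_rev 0 1 3 2 (by decide)
lemma e2e : gh ((0:Fin 4),2,3,1) = gh (0,1,3,2) := by
  rw [gh_rev 1 3 2 0 (by decide), e2a, inv_inv]
lemma e2f : gh ((3:Fin 4),1,0,2) = gh (0,1,3,2) := by
  rw [gh_rev 2 0 1 3 (by decide), e2c, inv_inv]
lemma e2g : gh ((1:Fin 4),0,2,3) = (gh (0,1,3,2))⁻¹ := by
  rw [gh_rev 3 2 0 1 (by decide), e2b]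

lemma key_pos (q : Quad 4) (c : Fin 3) (b : Bool) (hg : g q = some (c,b))
    (hq : gh q = if b then gh (rep c) else (gh (rep c))⁻¹) :
    FreeGroup.lift (fun c => gh (rep c)) (f q) = gh q := by
  unfold f
  rw [hg]
  cases b <;> simp only [if_true, if_false, Bool.false_eq_true] at hq <;>
    simp [FreeGroup.lift_apply_of, hq]

lemma key (q : Quad 4) : FreeGroup.lift (fun c => gh (rep c)) (f q) = gh q := by
  by_cases hd : qDistinct q
  · have hq : q ∈ L24 := mem24 q hd
    fin_cases hq
    · exact key_pos _ 0 true rfl rfl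
    · exact key_pos _ 0 true rfl e0b
    · exact key_pos _ 0 true rfl e0e
    · exact key_pos _ 0 true rfl e0f
    · exact key_pos _ 0 false rfl e0a
    · exact key_pos _ 0 false rfl e0c
    · exact key_pos _ 0 false rfl e0d
    · exact key_pos _ 0 false rfl e0g
    · exact key_pos _ 1 true rfl rfl
    · exact key_pos _ 1 true rfl e1b
    · exact key_pos _ 1 true rfl e1e
    · exact key_pos _ 1 true rfl e1f
    · exact key_pos _ 1 false rfl e1a
    · exact key_pos _ 1 false rfl e1c
    · exact key_pos _ 1 false rfl e1d
    · exact key_pos _ 1 false rfl e1g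
    · exact key_pos _ 2 true rfl rfl
    · exact key_pos _ 2 true rfl e2b
    · exact key_pos _ 2 true rfl e2e
    · exact key_pos _ 2 true rfl e2f
    · exact key_pos _ 2 false rfl e2a
    · exact key_pos _ 2 false rfl e2c
    · exact key_pos _ 2 false rfl e2d
    · exact key_pos _ 2 false rfl e2g
  · have hf : f q = 1 := by unfold f; rw [F1 q hd]
    rw [hf, map_one, gh_kill hd]

end GammaFourAux

open GammaFourAux in
/-- For `n = 4`, the group `Γ̂_4^4` is isomorphic to the free group of rank 3; it is freely
generated by the three generators `(1234)`, `(1324)`, `(1243)` (written here with `0`-based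
indices, so these are `(0,1,2,3)`, `(0,2,1,3)`, `(0,1,3,2)`). -/
theorem gammaHat_four_free :
    ∃ e : GammaHat 4 ≃* FreeGroup (Fin 3),
      e (gh ((0 : Fin 4), (1 : Fin 4), (2 : Fin 4), (3 : Fin 4))) = FreeGroup.of 0 ∧
      e (gh ((0 : Fin 4), (2 : Fin 4), (1 : Fin 4), (3 : Fin 4))) = FreeGroup.of 1 ∧
      e (gh ((0 : Fin 4), (1 : Fin 4), (3 : Fin 4), (2 : Fin 4))) = FreeGroup.of 2 := by
  refine ⟨MonoidHom.toMulEquiv (PresentedGroup.toGroup hrels)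
      (FreeGroup.lift (fun c => gh (rep c))) ?_ ?_, ?_, ?_, ?_⟩
  · ext q
    simp only [MonoidHom.comp_apply, MonoidHom.id_apply, PresentedGroup.toGroup.of]
    exact key q
  · ext c
    simp only [MonoidHom.comp_apply, MonoidHom.id_apply, FreeGroup.lift_apply_of]
    show PresentedGroup.toGroup hrels (gh (rep c)) = FreeGroup.of c
    rw [show gh (rep c) = PresentedGroup.of (rep c) from rfl, PresentedGroup.toGroup.of]
    fin_cases c <;> rfl
  · show PresentedGroup.toGroup hrels (gh ((0:Fin 4),(1:Fin 4),(2:Fin 4),(3:Fin 4))) = FreeGroup.of 0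
    exact PresentedGroup.toGroup.of hrels
  · show PresentedGroup.toGroup hrels (gh ((0:Fin 4),(2:Fin 4),(1:Fin 4),(3:Fin 4))) = FreeGroup.of 1
    exact PresentedGroup.toGroup.of hrels
  · show PresentedGroup.toGroup hrels (gh ((0:Fin 4),(1:Fin 4),(3:Fin 4),(2:Fin 4))) = FreeGroup.of 2
    exact PresentedGroup.toGroup.of hrels
end

section
/- For every n ≥ 4, there is a well-defined group homomorphism Φ_3 from Γ̂_n^4 to the free abelian group ℤ[n]_3 on the set [n]_3 of 3-element subsets of {1,…,n}, sending each generator (ijkl) to {i,j,k} − {i,j,l} + {i,k,l} − {j,k,l}; that is, this assignment on generators respects all defining relations of Γ̂_n^4. -/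
/-- The free abelian group `ℤ[n]_3` on the set of 3-element subsets of `Fin n`. -/
abbrev ZThree (n : ℕ) : Type := {s : Finset (Fin n) // s.card = 3} →₀ ℤ

/-- The basis element `{i, j, k}` of `ℤ[n]_3` (equal to `0` if `i, j, k` are not distinct). -/
noncomputable def tri {n : ℕ} (i j k : Fin n) : ZThree n :=
  if h : ({i, j, k} : Finset (Fin n)).card = 3 then Finsupp.single ⟨{i, j, k}, h⟩ 1 else 0

/-- The free abelian group `ℤ[n]_2` on the set of 2-element subsets of `Fin n`. -/
abbrev ZTwo (n : ℕ) : Type := {s : Finset (Fin n) // s.card = 2} →₀ ℤ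

/-- The basis element `{i, j}` of `ℤ[n]_2` (equal to `0` if `i ≠ j` fails). -/
noncomputable def pair {n : ℕ} (i j : Fin n) : ZTwo n :=
  if h : ({i, j} : Finset (Fin n)).card = 2 then Finsupp.single ⟨{i, j}, h⟩ 1 else 0

instance {n : ℕ} (q : Quad n) : Decidable (qDistinct q) := by
  unfold qDistinct; infer_instance

noncomputable def g3 {n : ℕ} (q : Quad n) : ZThree n :=
  if qDistinct q then
    tri q.1 q.2.1 q.2.2.1 - tri q.1 q.2.1 q.2.2.2 + tri q.1 q.2.2.1 q.2.2.2 -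
      tri q.2.1 q.2.2.1 q.2.2.2
  else 0

noncomputable def f3 {n : ℕ} (q : Quad n) : Multiplicative (ZThree n) :=
  Multiplicative.ofAdd (g3 q)

lemma tri_congr {n : ℕ} {i j k a b c : Fin n}
    (h : ({i, j, k} : Finset (Fin n)) = {a, b, c}) : tri i j k = tri a b c := by
  unfold tri; simp only [h]

lemma card4_le {n : ℕ} (a b c d : Fin n) : ({a, b, c, d} : Finset (Fin n)).card ≤ 4 := by
  have h1 := Finset.card_insert_le a ({b, c, d} : Finset (Fin n))
  have h2 := Finset.card_insert_le b ({c, d} : Finset (Fin n))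
  have h3 := Finset.card_insert_le c ({d} : Finset (Fin n))
  have h4 : ({d} : Finset (Fin n)).card = 1 := Finset.card_singleton d
  omega

lemma sub4 {n : ℕ} {a b c d e : Fin n} (h : ({a, b, c, d, e} : Finset (Fin n)).card = 5) :
    ({a, b, c, d} : Finset (Fin n)).card = 4 := by
  have h1 : ({a, b, c, d, e} : Finset (Fin n)) = insert e {a, b, c, d} := by
    ext x; simp [Finset.mem_insert]; tauto
  have h2 := Finset.card_insert_le e ({a, b, c, d} : Finset (Fin n))
  have h3 := card4_le a b c d
  rw [h1] at h
  omega

lemma g3_of_distinct {n : ℕ} (i j k l : Fin n) (h : qDistinct (i, j, k, l)) :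
    g3 (i, j, k, l) = tri i j k - tri i j l + tri i k l - tri j k l := by
  simp [g3, h]

set_option maxHeartbeats 1000000 in
/-- For every `n ≥ 4`, the assignment `(ijkl) ↦ {i,j,k} - {i,j,l} + {i,k,l} - {j,k,l}` on
generators respects all the defining relations of `Γ̂_n^4`, i.e. there is a well-defined group
homomorphism `Φ₃ : Γ̂_n^4 → ℤ[n]_3` with these values on the generators. -/
theorem gammaHat_Phi3_well_defined (n : ℕ) (hn : 4 ≤ n) :
    ∃ φ : GammaHat n →* Multiplicative (ZThree n),
      ∀ i j k l : Fin n, qDistinct (i, j, k, l) →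
        φ (gh (i, j, k, l)) =
          Multiplicative.ofAdd (tri i j k - tri i j l + tri i k l - tri j k l) := by
  have hrel : ∀ r ∈ gammaHatRels n, FreeGroup.lift f3 r = 1 := by
    intro r hr
    rcases hr with ((hr | hr) | hr) | hr
    · obtain ⟨q, hq, rfl⟩ := hr
      simp [f3, g3, hq]
    · obtain ⟨q, r, hq, hr, hint, rfl⟩ := hr
      simp only [map_mul, map_inv, FreeGroup.lift_apply_of, f3, ← ofAdd_neg, ← ofAdd_add]
      rw [show (1 : Multiplicative (ZThree n)) = Multiplicative.ofAdd 0 from rfl]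
      congr 1
      abel
    · obtain ⟨i, j, k, l, m, h5, rfl⟩ := hr
      have d1 : qDistinct (i, j, k, l) := sub4 h5
      have d2 : qDistinct (i, j, l, m) := by
        refine sub4 (a := i) (b := j) (c := l) (d := m) (e := k) ?_
        rw [show ({i, j, l, m, k} : Finset (Fin n)) = {i, j, k, l, m} from by
          ext x; simp [Finset.mem_insert]; tauto]
        exact h5
      have d3 : qDistinct (j, k, l, m) := by
        refine sub4 (a := j) (b := k) (c := l) (d := m) (e := i) ?_
        rw [show ({j, k, l, m, i} : Finset (Fin n)) = {i, j, k, l, m} from by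
          ext x; simp [Finset.mem_insert]; tauto]
        exact h5
      have d4 : qDistinct (i, j, k, m) := by
        refine sub4 (a := i) (b := j) (c := k) (d := m) (e := l) ?_
        rw [show ({i, j, k, m, l} : Finset (Fin n)) = {i, j, k, l, m} from by
          ext x; simp [Finset.mem_insert]; tauto]
        exact h5
      have d5 : qDistinct (i, k, l, m) := by
        refine sub4 (a := i) (b := k) (c := l) (d := m) (e := j) ?_
        rw [show ({i, k, l, m, j} : Finset (Fin n)) = {i, j, k, l, m} from by
          ext x; simp [Finset.mem_insert]; tauto]
        exact h5
      simp only [map_mul, map_inv, FreeGroup.lift_apply_of, f3, ← ofAdd_neg, ← ofAdd_add]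
      rw [show (1 : Multiplicative (ZThree n)) = Multiplicative.ofAdd 0 from rfl]
      congr 1
      rw [g3_of_distinct i j k l d1, g3_of_distinct i j l m d2, g3_of_distinct j k l m d3,
        g3_of_distinct i j k m d4, g3_of_distinct i k l m d5]
      abel
    · obtain ⟨i, j, k, l, hd, hw | hw⟩ := hr <;> subst hw <;>
        simp only [map_mul, FreeGroup.lift_apply_of, f3, ← ofAdd_add] <;>
        rw [show (1 : Multiplicative (ZThree n)) = Multiplicative.ofAdd 0 from rfl] <;>
        congr 1
      · have hd' : qDistinct (j, k, l, i) := by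
          have : qFinset ((j, k, l, i) : Quad n) = qFinset ((i, j, k, l) : Quad n) := by
            unfold qFinset; ext x; simp [Finset.mem_insert]; tauto
          unfold qDistinct; rw [this]; exact hd
        rw [g3_of_distinct i j k l hd, g3_of_distinct j k l i hd']
        rw [tri_congr (show ({j, k, i} : Finset (Fin n)) = {i, j, k} from by
              ext x; simp [Finset.mem_insert]; tauto),
            tri_congr (show ({j, l, i} : Finset (Fin n)) = {i, j, l} from by
              ext x; simp [Finset.mem_insert]; tauto),
            tri_congr (show ({k, l, i} : Finset (Fin n)) = {i, k, l} from by
              ext x; simp [Finset.mem_insert]; tauto)]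
        abel
      · have hd' : qDistinct (l, k, j, i) := by
          have : qFinset ((l, k, j, i) : Quad n) = qFinset ((i, j, k, l) : Quad n) := by
            unfold qFinset; ext x; simp [Finset.mem_insert]; tauto
          unfold qDistinct; rw [this]; exact hd
        rw [g3_of_distinct i j k l hd, g3_of_distinct l k j i hd']
        rw [tri_congr (show ({l, k, j} : Finset (Fin n)) = {j, k, l} from by
              ext x; simp [Finset.mem_insert]; tauto),
            tri_congr (show ({l, k, i} : Finset (Fin n)) = {i, k, l} from by
              ext x; simp [Finset.mem_insert]; tauto),
            tri_congr (show ({l, j, i} : Finset (Fin n)) = {i, j, l} from by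
              ext x; simp [Finset.mem_insert]; tauto),
            tri_congr (show ({k, j, i} : Finset (Fin n)) = {i, j, k} from by
              ext x; simp [Finset.mem_insert]; tauto)]
        abel
  refine ⟨PresentedGroup.toGroup hrel, fun i j k l h => ?_⟩
  rw [show gh ((i, j, k, l) : Quad n) = PresentedGroup.of (rels := gammaHatRels n) (i, j, k, l)
    from rfl, PresentedGroup.toGroup.of]
  simp [f3, g3_of_distinct i j k l h]
end

section
/- For every n ≥ 4, the image of the homomorphism Φ_3 : Γ̂_n^4 → ℤ[n]_3 is a free abelian group of rank N_n = C(n,3) − 1. -/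
/-!
Every generator is sent to an element of augmentation `1 - 1 + 1 - 1 = 0`, so the image of `Φ₃`
lies in the kernel `K` of the augmentation `ℤ[n]_3 → ℤ`, `{i,j,k} ↦ 1`, a free abelian group of
rank `C(n,3) - 1`. Conversely `Φ₃((ijkl)) + Φ₃((jikl)) = 2({i,j,k} - {i,j,l})`, and any two
3-element sets are joined by a chain of such single-element exchanges, so the image contains `2K`.
A subgroup squeezed between `2K` and `K` has the rank of `K`, and, as a subgroup of a finitely
generated free abelian group, it is free.
-/

open Module

theorem Submodule.finrank_eq_of_smul_mem {R M : Type*} [CommRing R] [StrongRankCondition R]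
    [AddCommGroup M] [Module R M] {N K : Submodule R M} [Module.Finite R N] [Module.Finite R K]
    {c : R} (hc : IsSMulRegular M c) (hNK : N ≤ K) (hKN : ∀ x ∈ K, c • x ∈ N) :
    finrank R N = finrank R K :=
  le_antisymm (Submodule.finrank_mono hNK) <|
    LinearMap.finrank_le_finrank_of_injective (f := (c • K.subtype).codRestrict N fun x ↦ hKN x x.2)
      fun _ _ hxy ↦ Subtype.ext (hc (congrArg Subtype.val hxy))

theorem Finset.induction_on_exchange {α : Type*} [DecidableEq α] {p : Finset α → Prop}
    {T : Finset α} (hT : p T)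
    (exchange : ∀ S a b, S.card = T.card → a ∈ S → b ∉ S → p (insert b (S.erase a)) → p S)
    {S : Finset α} (hS : S.card = T.card) : p S := by
  induction hk : (S \ T).card generalizing S with
  | zero =>
    have hST : S ⊆ T := Finset.sdiff_eq_empty_iff_subset.mp (Finset.card_eq_zero.mp hk)
    rwa [Finset.eq_of_subset_of_card_le hST hS.ge]
  | succ k ih =>
    obtain ⟨a, ha⟩ := Finset.card_pos.mp (by omega : 0 < (S \ T).card)
    obtain ⟨haS, haT⟩ := Finset.mem_sdiff.mp ha
    obtain ⟨b, hb⟩ : (T \ S).Nonempty := by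
      rw [Finset.sdiff_nonempty]
      intro hTS
      exact haT (by rwa [Finset.eq_of_subset_of_card_le hTS hS.le])
    obtain ⟨hbT, hbS⟩ := Finset.mem_sdiff.mp hb
    refine exchange S a b hS haS hbS (ih ?_ ?_)
    · rw [Finset.card_insert_of_notMem (fun h ↦ hbS (Finset.mem_of_mem_erase h)),
        Finset.card_erase_add_one haS, hS]
    · have : insert b (S.erase a) \ T = (S \ T).erase a := by
        ext x
        rcases eq_or_ne x b with rfl | hxb <;> simp [*, and_assoc]
      rw [this, Finset.card_erase_of_mem ha, hk, Nat.add_sub_cancel]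

abbrev MonoidHom.rangeSubmodule {G A : Type*} [Group G] [AddCommGroup A]
    (φ : G →* Multiplicative A) : Submodule ℤ A :=
  φ.range.toAddSubgroup'.toIntSubmodule

def MonoidHom.rangeSubmoduleEquiv {G A : Type*} [Group G] [AddCommGroup A]
    (φ : G →* Multiplicative A) : φ.range ≃* Multiplicative φ.rangeSubmodule where
  toFun x := Multiplicative.ofAdd ⟨Multiplicative.toAdd x.1, x.2⟩
  invFun y := ⟨Multiplicative.ofAdd (Multiplicative.toAdd y).1, (Multiplicative.toAdd y).2⟩
  left_inv _ := rfl
  right_inv _ := rfl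
  map_mul' _ _ := rfl

noncomputable abbrev augmentation (ι : Type*) : (ι →₀ ℤ) →ₗ[ℤ] ℤ :=
  Finsupp.linearCombination ℤ fun _ ↦ 1

theorem finrank_ker_augmentation {ι : Type*} [Finite ι] :
    finrank ℤ (LinearMap.ker (augmentation ι)) = Nat.card ι - 1 := by
  cases isEmpty_or_nonempty ι
  · simp [finrank_zero_of_subsingleton]
  have := Fintype.ofFinite ι
  obtain ⟨i⟩ := ‹Nonempty ι›
  have hsurj : Function.Surjective (augmentation ι) := fun c ↦ ⟨Finsupp.single i c, by simp⟩
  have h := (LinearMap.ker (augmentation ι)).finrank_quotient_add_finrank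
  rw [((augmentation ι).quotKerEquivOfSurjective hsurj).finrank_eq, finrank_self,
    finrank_finsupp_self, ← Nat.card_eq_fintype_card] at h
  omega

theorem smul_mem_of_mem_ker_augmentation {ι : Type*} {M : Submodule ℤ (ι →₀ ℤ)} {c : ℤ}
    (hM : ∀ i j, c • (Finsupp.single i 1 - Finsupp.single j 1) ∈ M) {x : ι →₀ ℤ}
    (hx : x ∈ LinearMap.ker (augmentation ι)) : c • x ∈ M := by
  rcases x.support.eq_empty_or_nonempty with h | ⟨j, -⟩
  · simp [Finsupp.support_eq_empty.mp h]
  have hx : x.sum (fun _ a ↦ a) = 0 := by simpa [Finsupp.linearCombination_apply] using hx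
  have : c • x = x.sum fun i a ↦ a • c • (Finsupp.single i 1 - Finsupp.single j 1) := by
    symm
    calc x.sum (fun i a ↦ a • c • (Finsupp.single i 1 - Finsupp.single j 1))
        = c • x.sum (fun i a ↦ Finsupp.single i a) -
            (x.sum fun _ a ↦ a) • c • Finsupp.single j 1 := by
          simp only [Finsupp.sum, smul_sub, Finset.sum_sub_distrib, Finset.smul_sum,
            Finset.sum_smul, Finsupp.smul_single, smul_eq_mul, mul_one, mul_comm]
      _ = c • x := by rw [Finsupp.sum_single, hx, zero_smul, sub_zero]
  rw [this]
  exact Submodule.finsuppSum_mem _ _ _ _ fun i _ ↦ M.smul_mem _ (hM i j)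

section KimManturov

variable {n : ℕ}

theorem qDistinct_iff {i j k l : Fin n} :
    qDistinct (i, j, k, l) ↔ i ≠ j ∧ i ≠ k ∧ i ≠ l ∧ j ≠ k ∧ j ≠ l ∧ k ≠ l := by
  simp only [qDistinct, qFinset, Finset.card_insert_eq_ite, Finset.mem_insert,
    Finset.mem_singleton, Finset.card_singleton]
  split_ifs <;> grind

theorem gh_eq_one_of_not_qDistinct {q : Quad n} (hq : ¬ qDistinct q) : gh q = 1 :=
  PresentedGroup.one_of_mem (Or.inl (Or.inl (Or.inl ⟨q, hq, rfl⟩)))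

noncomputable def triSet (s : Finset (Fin n)) : ZThree n :=
  if h : s.card = 3 then Finsupp.single ⟨s, h⟩ 1 else 0

theorem tri_eq_triSet (i j k : Fin n) : tri i j k = triSet {i, j, k} := rfl

theorem triSet_coe (S : {s : Finset (Fin n) // s.card = 3}) : triSet S.1 = Finsupp.single S 1 :=
  dif_pos S.2

theorem tri_swap (i j k : Fin n) : tri i j k = tri j i k := by
  rw [tri_eq_triSet, tri_eq_triSet, Finset.insert_comm]

theorem augmentation_tri {i j k : Fin n} (hij : i ≠ j) (hik : i ≠ k) (hjk : j ≠ k) :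
    augmentation _ (tri i j k) = 1 := by
  have h : ({i, j, k} : Finset (Fin n)).card = 3 := by
    rw [Finset.card_insert_of_notMem (by simp [hij, hik]),
      Finset.card_insert_of_notMem (by simp [hjk]), Finset.card_singleton]
  simp [tri, h]

variable {φ : GammaHat n →* Multiplicative (ZThree n)}
  (hφ : ∀ i j k l : Fin n, qDistinct (i, j, k, l) →
    φ (gh (i, j, k, l)) = Multiplicative.ofAdd (tri i j k - tri i j l + tri i k l - tri j k l))
include hφ

theorem range_le_ker_augmentation :
    φ.rangeSubmodule ≤ LinearMap.ker (augmentation _) := by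
  have hε : (augmentation _).toAddMonoidHom.toMultiplicative.comp φ = 1 := by
    refine PresentedGroup.ext fun q ↦ ?_
    by_cases hq : qDistinct q
    · obtain ⟨i, j, k, l⟩ := q
      obtain ⟨hij, hik, hil, hjk, hjl, hkl⟩ := qDistinct_iff.mp hq
      change Multiplicative.ofAdd (augmentation _ (Multiplicative.toAdd (φ (gh (i, j, k, l))))) = 1
      simp only [hφ i j k l hq, toAdd_ofAdd, LinearMap.map_sub, LinearMap.map_add,
        augmentation_tri hij hik hjk, augmentation_tri hij hil hjl, augmentation_tri hik hil hkl,
        augmentation_tri hjk hjl hkl, sub_self, zero_add, ofAdd_zero]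
    · change (augmentation _).toAddMonoidHom.toMultiplicative (φ (gh q)) = 1
      rw [gh_eq_one_of_not_qDistinct hq, map_one, map_one]
  rintro _ ⟨g, rfl⟩
  exact congrArg Multiplicative.toAdd (DFunLike.congr_fun hε g)

theorem sub_tri_mem {i j k l : Fin n} (hq : qDistinct (i, j, k, l)) :
    tri i j k - tri i j l + tri i k l - tri j k l ∈ φ.rangeSubmodule :=
  ⟨gh (i, j, k, l), hφ i j k l hq⟩

theorem two_smul_triSet_sub_exchange_mem {S : Finset (Fin n)} (hS : S.card = 3) {a b : Fin n}
    (ha : a ∈ S) (hb : b ∉ S) :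
    (2 : ℤ) • (triSet S - triSet (insert b (S.erase a))) ∈ φ.rangeSubmodule := by
  obtain ⟨i, j, hij, hSa⟩ := Finset.card_eq_two.mp (by rw [Finset.card_erase_of_mem ha, hS])
  have hi : i ≠ a ∧ i ∈ S := Finset.mem_erase.mp (by simp [hSa])
  have hj : j ≠ a ∧ j ∈ S := Finset.mem_erase.mp (by simp [hSa])
  have hbi : b ≠ i := fun h ↦ hb (h ▸ hi.2)
  have hbj : b ≠ j := fun h ↦ hb (h ▸ hj.2)
  have hba : b ≠ a := fun h ↦ hb (h ▸ ha)
  have hS : S = {i, j, a} := by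
    rw [← Finset.insert_erase ha, hSa]
    ext
    simp only [Finset.mem_insert, Finset.mem_singleton]
    tauto
  have hS' : insert b (S.erase a) = {i, j, b} := by
    rw [hSa]
    ext
    simp only [Finset.mem_insert, Finset.mem_singleton]
    tauto
  have hv := add_mem
    (sub_tri_mem hφ (qDistinct_iff.mpr ⟨hij, hi.1, hbi.symm, hj.1, hbj.symm, hba.symm⟩))
    (sub_tri_mem hφ (qDistinct_iff.mpr ⟨hij.symm, hj.1, hbj.symm, hi.1, hbi.symm, hba.symm⟩))
  rw [hS', hS, ← tri_eq_triSet, ← tri_eq_triSet]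
  convert hv using 1
  rw [tri_swap j i a, tri_swap j i b]
  abel

theorem two_smul_single_sub_mem (S T : {s : Finset (Fin n) // s.card = 3}) :
    (2 : ℤ) • (Finsupp.single S (1 : ℤ) - Finsupp.single T 1) ∈ φ.rangeSubmodule := by
  rw [← triSet_coe, ← triSet_coe]
  refine Finset.induction_on_exchange (p := fun S ↦ (2 : ℤ) • (triSet S - triSet T.1) ∈ _)
    (by simp) (fun S a b hS ha hb hS' ↦ ?_) (S.2.trans T.2.symm)
  have := add_mem (two_smul_triSet_sub_exchange_mem hφ (hS.trans T.2) ha hb) hS'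
  rwa [← smul_add, sub_add_sub_cancel] at this

theorem finrank_rangeSubmodule : finrank ℤ φ.rangeSubmodule = n.choose 3 - 1 := by
  rw [Submodule.finrank_eq_of_smul_mem (IsSMulRegular.of_ne_zero two_ne_zero)
    (range_le_ker_augmentation hφ)
    fun _ hx ↦ smul_mem_of_mem_ker_augmentation (two_smul_single_sub_mem hφ) hx,
    finrank_ker_augmentation, Nat.card_eq_fintype_card, Fintype.card_finset_len, Fintype.card_fin]

end KimManturov

theorem gammaHat_Phi3_image_general (n : ℕ)
    (φ : GammaHat n →* Multiplicative (ZThree n))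
    (hφ : ∀ i j k l : Fin n, qDistinct (i, j, k, l) →
      φ (gh (i, j, k, l)) =
        Multiplicative.ofAdd (tri i j k - tri i j l + tri i k l - tri j k l)) :
    Nonempty (φ.range ≃* Multiplicative (Fin (n.choose 3 - 1) → ℤ)) :=
  ⟨φ.rangeSubmoduleEquiv.trans <| AddEquiv.toMultiplicative
    (finBasisOfFinrankEq ℤ _ (finrank_rangeSubmodule hφ)).equivFun.toAddEquiv⟩

/-- For every `n ≥ 4`, the image of the homomorphism `Φ₃ : Γ̂_n^4 → ℤ[n]_3`
(the homomorphism determined by `Φ₃((ijkl)) = {i,j,k} - {i,j,l} + {i,k,l} - {j,k,l}`)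
is a free abelian group of rank `N_n = C(n,3) - 1`. -/
theorem gammaHat_Phi3_image (n : ℕ) (hn : 4 ≤ n)
    (φ : GammaHat n →* Multiplicative (ZThree n))
    (hφ : ∀ i j k l : Fin n, qDistinct (i, j, k, l) →
      φ (gh (i, j, k, l)) =
        Multiplicative.ofAdd (tri i j k - tri i j l + tri i k l - tri j k l)) :
    Nonempty (φ.range ≃* Multiplicative (Fin (n.choose 3 - 1) → ℤ)) :=
  gammaHat_Phi3_image_general n φ hφ
end

section
/- For every n ≥ 4, the image of the homomorphism Φ_3 : Γ̂_n^4 → ℤ[n]_3 is NOT a direct summand of the free abelian group ℤ[n]_3. -/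
namespace GammaHatAux
variable {n : ℕ}

lemma card3le (a b c : Fin n) : ({a,b,c} : Finset (Fin n)).card ≤ 3 := by
  have h1 := Finset.card_insert_le a ({b,c} : Finset (Fin n))
  have h2 := Finset.card_insert_le b ({c} : Finset (Fin n))
  simp at h2; omega

lemma qDistinct_ne {i j k l : Fin n} (h : qDistinct (i,j,k,l)) :
    i≠j ∧ i≠k ∧ i≠l ∧ j≠k ∧ j≠l ∧ k≠l := by
  have h' : ({i,j,k,l} : Finset (Fin n)).card = 4 := h
  have hi : i ∉ ({j,k,l} : Finset (Fin n)) := by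
    intro hm
    rw [Finset.insert_eq_self.mpr hm] at h'
    have := card3le j k l; omega
  rw [Finset.card_insert_of_notMem hi] at h'
  have hj : j ∉ ({k,l} : Finset (Fin n)) := by
    intro hm
    rw [Finset.insert_eq_self.mpr hm] at h'
    have h2 := Finset.card_insert_le k ({l} : Finset (Fin n)); simp at h2; omega
  rw [Finset.card_insert_of_notMem hj] at h'
  have hk : k ≠ l := by
    intro hm
    rw [hm, Finset.insert_eq_self.mpr (Finset.mem_singleton_self l)] at h'
    simp at h'
  simp only [Finset.mem_insert, Finset.mem_singleton, not_or] at hi hj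
  exact ⟨hi.1, hi.2.1, hi.2.2, hj.1, hj.2, hk⟩

lemma card3 {i j k : Fin n} (hij : i ≠ j) (hik : i ≠ k) (hjk : j ≠ k) :
    ({i,j,k} : Finset (Fin n)).card = 3 := by
  rw [Finset.card_insert_of_notMem (by simp [hij, hik]),
      Finset.card_insert_of_notMem (by simp [hjk]), Finset.card_singleton]

lemma card4 {i j k l : Fin n} (hij : i≠j) (hik : i≠k) (hil : i≠l) (hjk : j≠k)
    (hjl : j≠l) (hkl : k≠l) : qDistinct (i,j,k,l) := by
  show ({i,j,k,l} : Finset (Fin n)).card = 4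
  rw [Finset.card_insert_of_notMem (by simp [hij, hik, hil]),
      Finset.card_insert_of_notMem (by simp [hjk, hjl]),
      Finset.card_insert_of_notMem (by simp [hkl]), Finset.card_singleton]

lemma tri_comm (i j k : Fin n) : tri j i k = tri i j k := by
  simp only [tri, Finset.insert_comm j i]

/-- The parity invariant: sum of coefficients (mod 2) over the triples containing
a fixed pair `P`. -/
noncomputable def chi (P : Finset (Fin n)) : ZThree n →+ ZMod 2 :=
  Finsupp.liftAddHom fun s => if P ⊆ s.1 then Int.castAddHom (ZMod 2) else 0

lemma chi_tri (P : Finset (Fin n)) {i j k : Fin n} (h : ({i,j,k} : Finset (Fin n)).card = 3) :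
    chi P (tri i j k) = if P ⊆ ({i,j,k} : Finset (Fin n)) then 1 else 0 := by
  rw [tri, dif_pos h, chi, Finsupp.liftAddHom_apply_single]
  split_ifs <;> simp

lemma parity {u v i j k l : Fin n} (huv : u ≠ v) (hij : i≠j) (hik : i≠k) (hil : i≠l)
    (hjk : j≠k) (hjl : j≠l) (hkl : k≠l) :
    (if ({u,v} : Finset (Fin n)) ⊆ {i,j,k} then (1 : ZMod 2) else 0)
  - (if ({u,v} : Finset (Fin n)) ⊆ {i,j,l} then 1 else 0)
  + (if ({u,v} : Finset (Fin n)) ⊆ {i,k,l} then 1 else 0)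
  - (if ({u,v} : Finset (Fin n)) ⊆ {j,k,l} then 1 else 0) = 0 := by
  simp only [Finset.insert_subset_iff, Finset.singleton_subset_iff, Finset.mem_insert,
    Finset.mem_singleton]
  by_cases hu : u = i ∨ u = j ∨ u = k ∨ u = l
  · by_cases hv : v = i ∨ v = j ∨ v = k ∨ v = l
    · rcases hu with rfl|rfl|rfl|rfl <;> rcases hv with rfl|rfl|rfl|rfl <;>
        simp_all [ne_comm] <;>
        first
          | decide
          | (rw [if_neg (by intro h; subst h; simp_all)]; decide)
    · push_neg at hv
      rw [if_neg (by tauto), if_neg (by tauto), if_neg (by tauto), if_neg (by tauto)]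
      decide
  · push_neg at hu
    rw [if_neg (by tauto), if_neg (by tauto), if_neg (by tauto), if_neg (by tauto)]
    decide

lemma gh_eq_one {q : Quad n} (hq : ¬ qDistinct q) : gh q = 1 := by
  show PresentedGroup.mk (gammaHatRels n) (FreeGroup.of q) = 1
  refine (QuotientGroup.eq_one_iff _).mpr ?_
  exact Subgroup.subset_normalClosure (Or.inl (Or.inl (Or.inl ⟨q, hq, rfl⟩)))

lemma gen_zero {n : ℕ} (φ : GammaHat n →* Multiplicative (ZThree n))
    (hφ : ∀ i j k l : Fin n, qDistinct (i, j, k, l) →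
      φ (gh (i, j, k, l)) =
        Multiplicative.ofAdd (tri i j k - tri i j l + tri i k l - tri j k l))
    {u v : Fin n} (huv : u ≠ v) (q : Quad n) :
    chi {u, v} (Multiplicative.toAdd (φ (gh q))) = 0 := by
  by_cases hq : qDistinct q
  · obtain ⟨i, j, k, l⟩ := q
    obtain ⟨hij, hik, hil, hjk, hjl, hkl⟩ := qDistinct_ne hq
    rw [hφ i j k l hq, toAdd_ofAdd, map_sub, map_add, map_sub,
      chi_tri _ (card3 hij hik hjk), chi_tri _ (card3 hij hil hjl),
      chi_tri _ (card3 hik hil hkl), chi_tri _ (card3 hjk hjl hkl)]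
    exact parity huv hij hik hil hjk hjl hkl
  · rw [gh_eq_one hq, map_one]
    simp

lemma vanish_all {n : ℕ} (φ : GammaHat n →* Multiplicative (ZThree n))
    (hφ : ∀ i j k l : Fin n, qDistinct (i, j, k, l) →
      φ (gh (i, j, k, l)) =
        Multiplicative.ofAdd (tri i j k - tri i j l + tri i k l - tri j k l))
    {u v : Fin n} (huv : u ≠ v) (g : GammaHat n) :
    chi {u, v} (Multiplicative.toAdd (φ g)) = 0 := by
  have main : ((AddMonoidHom.toMultiplicative (chi ({u, v} : Finset (Fin n)))).comp φ).comp
      (PresentedGroup.mk (gammaHatRels n)) = 1 := by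
    apply FreeGroup.ext_hom
    intro q
    have hmk : (PresentedGroup.mk (gammaHatRels n)) (FreeGroup.of q) = gh q := rfl
    simp only [MonoidHom.comp_apply, MonoidHom.one_apply, hmk,
      AddMonoidHom.toMultiplicative_apply_apply, gen_zero φ hφ huv q, ofAdd_zero]
  obtain ⟨w, rfl⟩ := PresentedGroup.mk_surjective (gammaHatRels n) g
  have := DFunLike.congr_fun main w
  simpa [AddMonoidHom.toMultiplicative_apply_apply, - ofAdd_toAdd] using this

end GammaHatAux

open GammaHatAux in
/-- For every `n ≥ 4`, the image of the homomorphism `Φ₃ : Γ̂_n^4 → ℤ[n]_3`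
(the homomorphism determined by `Φ₃((ijkl)) = {i,j,k} - {i,j,l} + {i,k,l} - {j,k,l}`),
viewed as an additive subgroup of `ℤ[n]_3`, is NOT a direct summand of `ℤ[n]_3`,
i.e. it has no complementary additive subgroup. -/
theorem gammaHat_Phi3_image_not_direct_summand (n : ℕ) (hn : 4 ≤ n)
    (φ : GammaHat n →* Multiplicative (ZThree n))
    (hφ : ∀ i j k l : Fin n, qDistinct (i, j, k, l) →
      φ (gh (i, j, k, l)) =
        Multiplicative.ofAdd (tri i j k - tri i j l + tri i k l - tri j k l)) :
    ¬ ∃ K : AddSubgroup (ZThree n),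
        IsCompl
          (AddSubgroup.closure
            (Set.range fun g : GammaHat n => Multiplicative.toAdd (φ g))) K := by
  rintro ⟨K, hK⟩
  set H : AddSubgroup (ZThree n) :=
    AddSubgroup.closure (Set.range fun g : GammaHat n => Multiplicative.toAdd (φ g)) with hH
  -- the four distinguished elements 0, 1, 2, 3 of `Fin n`
  set a0 : Fin n := ⟨0, by omega⟩ with ha0
  set a1 : Fin n := ⟨1, by omega⟩ with ha1
  set a2 : Fin n := ⟨2, by omega⟩ with ha2
  set a3 : Fin n := ⟨3, by omega⟩ with ha3
  have h01 : a0 ≠ a1 := by simp [ha0, ha1, Fin.ext_iff]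
  have h02 : a0 ≠ a2 := by simp [ha0, ha2, Fin.ext_iff]
  have h03 : a0 ≠ a3 := by simp [ha0, ha3, Fin.ext_iff]
  have h12 : a1 ≠ a2 := by simp [ha1, ha2, Fin.ext_iff]
  have h13 : a1 ≠ a3 := by simp [ha1, ha3, Fin.ext_iff]
  have h23 : a2 ≠ a3 := by simp [ha2, ha3, Fin.ext_iff]
  have hker : ∀ y ∈ H, chi {a0, a2} y = 0 := by
    intro y hy
    refine AddMonoidHom.mem_ker.mp ?_
    refine (AddSubgroup.closure_le (chi {a0, a2}).ker).mpr ?_ hy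
    rintro z ⟨g, rfl⟩
    exact AddMonoidHom.mem_ker.mpr (vanish_all φ hφ h02 g)
  -- the witness element x with 2x ∈ H and χ(x) = 1
  obtain ⟨x, hx⟩ : ∃ x : ZThree n, x = tri a0 a1 a2 - tri a0 a1 a3 := ⟨_, rfl⟩
  have hd1 : qDistinct (a0, a1, a2, a3) := card4 h01 h02 h03 h12 h13 h23
  have hd2 : qDistinct (a1, a0, a2, a3) := card4 h01.symm h12 h13 h02 h03 h23
  have hmem : x + x ∈ H := by
    have hm0 : Multiplicative.toAdd (φ (gh (a0,a1,a2,a3) * gh (a1,a0,a2,a3))) ∈ H :=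
      AddSubgroup.subset_closure (Set.mem_range_self _)
    have heq : Multiplicative.toAdd (φ (gh (a0,a1,a2,a3) * gh (a1,a0,a2,a3))) = x + x := by
      rw [map_mul, hφ a0 a1 a2 a3 hd1, hφ a1 a0 a2 a3 hd2, toAdd_mul, toAdd_ofAdd,
        toAdd_ofAdd, tri_comm a0 a1 a2, tri_comm a0 a1 a3, hx]
      abel
    rwa [heq] at hm0
  have hchi : chi {a0, a2} x = 1 := by
    rw [hx, map_sub, chi_tri _ (card3 h01 h02 h12), chi_tri _ (card3 h01 h03 h13),
      if_pos (by simp [Finset.insert_subset_iff]),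
      if_neg (by
        simp only [Finset.insert_subset_iff, Finset.singleton_subset_iff,
          Finset.mem_insert, Finset.mem_singleton, not_and, not_or]
        intro _
        exact ⟨fun h => absurd h.symm h02, fun h => absurd h.symm h12, fun h => absurd h h23⟩)]
    decide
  have hxH : x ∉ H := by
    intro hxH
    have := hker x hxH
    rw [hchi] at this
    exact one_ne_zero this
  -- decompose x using the complement and derive a contradiction
  have hxsup : x ∈ H ⊔ K := by rw [hK.sup_eq_top]; trivial
  obtain ⟨h, hh, k, hk, hsum⟩ := AddSubgroup.mem_sup.mp hxsup
  have h2kH : k + k ∈ H := by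
    have : k + k = (x + x) - (h + h) := by rw [← hsum]; abel
    rw [this]
    exact AddSubgroup.sub_mem _ hmem (AddSubgroup.add_mem _ hh hh)
  have h2kK : k + k ∈ K := AddSubgroup.add_mem _ hk hk
  have hk20 : k + k = 0 := (AddSubgroup.disjoint_def.mp hK.disjoint) h2kH h2kK
  have hk0 : k = 0 := by
    ext s
    have := congrArg (fun f : ZThree n => f s) hk20
    simp only [Finsupp.add_apply, Finsupp.coe_zero, Pi.zero_apply] at this
    simp only [Finsupp.coe_zero, Pi.zero_apply]
    omega
  rw [hk0, add_zero] at hsum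
  exact hxH (hsum ▸ hh)
end

section
/- For every n ≥ 5, the image of the homomorphism Φ_2 : Γ̂_n^4 → ℤ[n]_2 is exactly the subgroup of elements Σ_{1 ≤ i < j ≤ n} a_{i,j}{i,j} whose coefficient sum Σ a_{i,j} equals 0. -/
section Aux
variable {n : ℕ}

lemma card_three_le (a b c : Fin n) : ({a, b, c} : Finset (Fin n)).card ≤ 3 := by
  calc ({a,b,c} : Finset (Fin n)).card ≤ ({b,c} : Finset (Fin n)).card + 1 :=
        Finset.card_insert_le _ _
    _ ≤ (({c} : Finset (Fin n)).card + 1) + 1 := by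
        have := Finset.card_insert_le b ({c} : Finset (Fin n)); omega
    _ = 3 := by simp

lemma quad_distinct {i j k l : Fin n} (h : qDistinct (i, j, k, l)) :
    i ≠ j ∧ i ≠ k ∧ i ≠ l ∧ j ≠ k ∧ j ≠ l ∧ k ≠ l := by
  simp only [qDistinct, qFinset] at h
  refine ⟨?_, ?_, ?_, ?_, ?_, ?_⟩
  · rintro rfl
    have hs : ({i,i,k,l} : Finset (Fin n)) ⊆ {i,k,l} := by intro x; simp only [Finset.mem_insert, Finset.mem_singleton]; tauto
    have := Finset.card_le_card hs; have := card_three_le i k l; omega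
  · rintro rfl
    have hs : ({i,j,i,l} : Finset (Fin n)) ⊆ {i,j,l} := by intro x; simp only [Finset.mem_insert, Finset.mem_singleton]; tauto
    have := Finset.card_le_card hs; have := card_three_le i j l; omega
  · rintro rfl
    have hs : ({i,j,k,i} : Finset (Fin n)) ⊆ {i,j,k} := by intro x; simp only [Finset.mem_insert, Finset.mem_singleton]; tauto
    have := Finset.card_le_card hs; have := card_three_le i j k; omega
  · rintro rfl
    have hs : ({i,j,j,l} : Finset (Fin n)) ⊆ {i,j,l} := by intro x; simp only [Finset.mem_insert, Finset.mem_singleton]; tauto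
    have := Finset.card_le_card hs; have := card_three_le i j l; omega
  · rintro rfl
    have hs : ({i,j,k,j} : Finset (Fin n)) ⊆ {i,j,k} := by intro x; simp only [Finset.mem_insert, Finset.mem_singleton]; tauto
    have := Finset.card_le_card hs; have := card_three_le i j k; omega
  · rintro rfl
    have hs : ({i,j,k,k} : Finset (Fin n)) ⊆ {i,j,k} := by intro x; simp only [Finset.mem_insert, Finset.mem_singleton]; tauto
    have := Finset.card_le_card hs; have := card_three_le i j k; omega

lemma quad_distinct_of_ne {a b c d : Fin n} (hab : a ≠ b) (hac : a ≠ c) (had : a ≠ d)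
    (hbc : b ≠ c) (hbd : b ≠ d) (hcd : c ≠ d) : qDistinct (a, b, c, d) := by
  simp only [qDistinct, qFinset]
  rw [Finset.card_insert_of_notMem (by simp [hab, hac, had]),
    Finset.card_insert_of_notMem (by simp [hbc, hbd]),
    Finset.card_insert_of_notMem (by simp [hcd]), Finset.card_singleton]

lemma pair_eq {i j : Fin n} (h : i ≠ j) :
    pair i j = Finsupp.single ⟨{i, j}, Finset.card_pair h⟩ (1 : ℤ) := by
  rw [pair, dif_pos (Finset.card_pair h)]

/-- the coefficient-sum homomorphism -/
noncomputable def coeffSum (n : ℕ) : ZTwo n →+ ℤ :=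
  Finsupp.liftAddHom (fun _ => AddMonoidHom.id ℤ)

lemma coeffSum_apply (x : ZTwo n) : coeffSum n x = x.sum fun _ c => c :=
  Finsupp.liftAddHom_apply _ _

lemma coeffSum_single (s : {s : Finset (Fin n) // s.card = 2}) (c : ℤ) :
    coeffSum n (Finsupp.single s c) = c := by
  simp [coeffSum]

end Aux

/-- For every `n ≥ 5`, the image of the homomorphism `Φ₂ : Γ̂_n^4 → ℤ[n]_2`
(the homomorphism determined by `Φ₂((ijkl)) = {i,k} - {j,l}`) is exactly the subgroup of
elements of `ℤ[n]_2` whose coefficient sum is `0`. -/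
theorem gammaHat_Phi2_image (n : ℕ) (hn : 5 ≤ n)
    (φ : GammaHat n →* Multiplicative (ZTwo n))
    (hφ : ∀ i j k l : Fin n, qDistinct (i, j, k, l) →
      φ (gh (i, j, k, l)) = Multiplicative.ofAdd (pair i k - pair j l)) :
    Set.range (fun g : GammaHat n => Multiplicative.toAdd (φ g)) =
      {x : ZTwo n | x.sum (fun _ c => c) = 0} := by
  -- Forward direction: every value of `φ` has coefficient sum zero.
  have hf : ∀ g : GammaHat n, coeffSum n (Multiplicative.toAdd (φ g)) = 0 := by
    set f : FreeGroup (Quad n) →* Multiplicative ℤ :=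
      (AddMonoidHom.toMultiplicative (coeffSum n)).comp
        (φ.comp (QuotientGroup.mk' (Subgroup.normalClosure (gammaHatRels n)))) with hfdef
    have h1 : f = 1 := by
      apply FreeGroup.ext_hom
      intro q
      have hfq : f (FreeGroup.of q) =
          Multiplicative.ofAdd (coeffSum n (Multiplicative.toAdd (φ (gh q)))) := rfl
      by_cases hq : qDistinct q
      · obtain ⟨i, j, k, l⟩ := q
        have hik := (quad_distinct hq).2.1
        have hjl := (quad_distinct hq).2.2.2.2.1
        rw [hfq, hφ i j k l hq, toAdd_ofAdd]
        have : coeffSum n (pair i k - pair j l) = 0 := by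
          rw [map_sub, pair_eq hik, pair_eq hjl, coeffSum_single, coeffSum_single, sub_self]
        rw [this]
        rfl
      · have hrel : FreeGroup.of q ∈ gammaHatRels n :=
          Set.mem_union_left _ (Set.mem_union_left _ (Set.mem_union_left _ ⟨q, hq, rfl⟩))
        have hone : gh q = 1 := by
          rw [gh, PresentedGroup.of]
          exact (QuotientGroup.eq_one_iff _).mpr (Subgroup.subset_normalClosure hrel)
        rw [hfq, hone]
        simp
    intro g
    obtain ⟨w, rfl⟩ := QuotientGroup.mk'_surjective (Subgroup.normalClosure (gammaHatRels n)) g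
    have := congrArg (fun h : FreeGroup (Quad n) →* Multiplicative ℤ => h w) h1
    simp only [hfdef, MonoidHom.comp_apply, MonoidHom.one_apply] at this
    have h2 : Multiplicative.toAdd ((AddMonoidHom.toMultiplicative (coeffSum n))
        (φ ((QuotientGroup.mk' (Subgroup.normalClosure (gammaHatRels n))) w))) =
        Multiplicative.toAdd (1 : Multiplicative ℤ) := congrArg Multiplicative.toAdd this
    exact h2
  -- The range as an additive subgroup.
  let H : AddSubgroup (ZTwo n) :=
    { carrier := Set.range (fun g : GammaHat n => Multiplicative.toAdd (φ g))
      zero_mem' := ⟨1, by simp⟩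
      add_mem' := by rintro a b ⟨g, rfl⟩ ⟨g', rfl⟩; exact ⟨g * g', by simp⟩
      neg_mem' := by rintro a ⟨g, rfl⟩; exact ⟨g⁻¹, by simp⟩ }
  -- differences of basis vectors with disjoint supports belong to the range
  have hpair : ∀ s t : {s : Finset (Fin n) // s.card = 2}, Disjoint (s : Finset (Fin n)) t →
      Finsupp.single s (1 : ℤ) - Finsupp.single t 1 ∈ H := by
    rintro ⟨S, hS⟩ ⟨T, hT⟩ hd
    obtain ⟨a, b, hab, rfl⟩ := Finset.card_eq_two.mp hS
    obtain ⟨c, d, hcd, rfl⟩ := Finset.card_eq_two.mp hT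
    simp only at hd
    have hmem : ∀ x ∈ ({a, b} : Finset (Fin n)), ∀ y ∈ ({c, d} : Finset (Fin n)), x ≠ y := by
      intro x hx y hy
      exact Finset.disjoint_left.mp hd hx ∘ fun e => e ▸ hy
    have hac : a ≠ c := hmem a (by simp) c (by simp)
    have had : a ≠ d := hmem a (by simp) d (by simp)
    have hbc : b ≠ c := hmem b (by simp) c (by simp)
    have hbd : b ≠ d := hmem b (by simp) d (by simp)
    have hq : qDistinct (a, c, b, d) :=
      quad_distinct_of_ne hac hab had (Ne.symm hbc) hcd hbd
    refine ⟨gh (a, c, b, d), ?_⟩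
    simp only [hφ a c b d hq, toAdd_ofAdd]
    rw [pair_eq hab, pair_eq hcd]
  -- differences of arbitrary basis vectors belong to the range
  have hgen : ∀ s t : {s : Finset (Fin n) // s.card = 2},
      Finsupp.single s (1 : ℤ) - Finsupp.single t 1 ∈ H := by
    intro s t
    by_cases hst : s = t
    · subst hst; rw [sub_self]; exact H.zero_mem
    by_cases hd : Disjoint (s : Finset (Fin n)) t
    · exact hpair s t hd
    · -- pick a pair disjoint from both
      have hinter : ((s : Finset (Fin n)) ∩ t).Nonempty :=
        Finset.not_disjoint_iff_nonempty_inter.mp hd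
      have hun : ((s : Finset (Fin n)) ∪ t).card ≤ 3 := by
        have h1 := Finset.card_union_add_card_inter (s : Finset (Fin n)) t
        have h2 : 1 ≤ ((s : Finset (Fin n)) ∩ t).card := Finset.card_pos.mpr hinter
        have := s.2; have := t.2; omega
      have hcompl : 2 ≤ (Finset.univ \ ((s : Finset (Fin n)) ∪ t)).card := by
        rw [Finset.card_sdiff_of_subset (Finset.subset_univ _), Finset.card_univ, Fintype.card_fin]
        omega
      obtain ⟨u, hu_sub, hu_card⟩ := Finset.exists_subset_card_eq hcompl
      have hd1 : Disjoint (s : Finset (Fin n)) u := by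
        rw [Finset.disjoint_left]
        intro x hx hxu
        have := hu_sub hxu
        simp only [Finset.mem_sdiff, Finset.mem_union] at this
        exact this.2 (Or.inl hx)
      have hd2 : Disjoint u (t : Finset (Fin n)) := by
        rw [Finset.disjoint_left]
        intro x hxu hxt
        have := hu_sub hxu
        simp only [Finset.mem_sdiff, Finset.mem_union] at this
        exact this.2 (Or.inr hxt)
      have key : Finsupp.single s (1 : ℤ) - Finsupp.single t 1 =
          (Finsupp.single s 1 - Finsupp.single ⟨u, hu_card⟩ 1) +
          (Finsupp.single ⟨u, hu_card⟩ 1 - Finsupp.single t 1) := by abel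
      rw [key]
      exact H.add_mem (hpair s ⟨u, hu_card⟩ hd1) (hpair ⟨u, hu_card⟩ t hd2)
  -- conclude
  ext x
  simp only [Set.mem_range, Set.mem_setOf_eq]
  constructor
  · rintro ⟨g, rfl⟩
    have := hf g
    rwa [coeffSum_apply] at this
  · intro hx
    -- a fixed base pair
    have h01 : (⟨0, by omega⟩ : Fin n) ≠ ⟨1, by omega⟩ :=
      Fin.ne_of_val_ne (by simp)
    set t0 : {s : Finset (Fin n) // s.card = 2} :=
      ⟨{⟨0, by omega⟩, ⟨1, by omega⟩}, Finset.card_pair h01⟩ with ht0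
    have hx2 : x = ∑ s ∈ x.support, x s • (Finsupp.single s (1 : ℤ) - Finsupp.single t0 1) := by
      simp only [smul_sub]
      rw [Finset.sum_sub_distrib]
      have e1 : ∑ s ∈ x.support, x s • Finsupp.single s (1 : ℤ) = x := by
        have : ∀ s ∈ x.support, x s • Finsupp.single s (1 : ℤ) = Finsupp.single s (x s) := by
          intro s _
          rw [Finsupp.smul_single, smul_eq_mul, mul_one]
        rw [Finset.sum_congr rfl this]
        exact Finsupp.sum_single x
      have e2 : ∑ s ∈ x.support, x s • Finsupp.single t0 (1 : ℤ) = 0 := by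
        rw [← Finset.sum_smul]
        have : ∑ s ∈ x.support, x s = 0 := hx
        rw [this, zero_smul]
      rw [e1, e2, sub_zero]
    have hxH : x ∈ H := by
      rw [hx2]
      exact AddSubgroup.sum_mem H fun s _ => AddSubgroup.zsmul_mem H (hgen s t0) (x s)
    exact hxH
end

section
/- For n = 4, the group Γ_4^4 is isomorphic to the free product (ℤ/2ℤ) ∗ (ℤ/2ℤ) ∗ (ℤ/2ℤ) of three copies of ℤ/2ℤ, with the three free factors generated by (1234), (1324), (1243). -/
/-- The defining relators of the group `Γ_n^4` of Kim–Manturov: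
generators indexed by quadruples of distinct elements (non-distinct quadruples are killed),
involutive relations (1), commutativity relations (2), pentagon relations (3) and dihedral
relations (4). -/
def gammaRels (n : ℕ) : Set (FreeGroup (Quad n)) :=
  {w | ∃ q : Quad n, ¬ qDistinct q ∧ w = FreeGroup.of q} ∪
  {w | ∃ q : Quad n, qDistinct q ∧ w = FreeGroup.of q * FreeGroup.of q} ∪
  {w | ∃ q r : Quad n, qDistinct q ∧ qDistinct r ∧ (qFinset q ∩ qFinset r).card ≤ 2 ∧
      w = FreeGroup.of q * FreeGroup.of r * (FreeGroup.of q)⁻¹ * (FreeGroup.of r)⁻¹} ∪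
  {w | ∃ i j k l m : Fin n, ({i, j, k, l, m} : Finset (Fin n)).card = 5 ∧
      w = FreeGroup.of (i, j, k, l) * FreeGroup.of (i, j, l, m) * FreeGroup.of (j, k, l, m) *
        FreeGroup.of (i, j, k, m) * FreeGroup.of (i, k, l, m)} ∪
  {w | ∃ i j k l : Fin n, qDistinct (i, j, k, l) ∧
      (w = FreeGroup.of (i, j, k, l) * (FreeGroup.of (j, k, l, i))⁻¹ ∨
       w = FreeGroup.of (i, j, k, l) * (FreeGroup.of (l, k, j, i))⁻¹)}

/-- The group `Γ_n^4` of Kim–Manturov. -/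
abbrev Gamma (n : ℕ) : Type := PresentedGroup (gammaRels n)

/-- The generator `(ijkl)` of `Γ_n^4`. -/
def gg {n : ℕ} (q : Quad n) : Gamma n := PresentedGroup.of q

/-! For `n = 4` a quadruple of distinct indices uses all four of them, so the commutation
relations (2) and the pentagon relations (3) are vacuous. What remains says that the generators
are involutions and that `(ijkl)` only depends on the orbit of `(i, j, k, l)` under the dihedral
group generated by rotation and reversal. The 24 orderings of `{0, 1, 2, 3}` form three orbits,
distinguished by the diagonals `{{i, k}, {j, l}}`, hence `Γ_4^4` is freely generated by three
involutions. -/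

noncomputable def zmodTwoHom {G : Type*} [Group G] (g : G) (hg : g ^ 2 = 1) :
    Multiplicative (ZMod 2) →* G :=
  AddMonoidHom.toMultiplicativeLeft <| ZMod.lift 2
    ⟨zmultiplesHom (Additive G) (Additive.ofMul g), by
      rw [zmultiplesHom_apply, ← ofMul_zpow, Nat.cast_ofNat, zpow_ofNat, hg, ofMul_one]⟩

theorem zmodTwoHom_ofAdd_one {G : Type*} [Group G] (g : G) (hg : g ^ 2 = 1) :
    zmodTwoHom g hg (Multiplicative.ofAdd 1) = g := by
  change Additive.toMul (ZMod.lift 2 _ ((1 : ℤ) : ZMod 2)) = g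
  rw [ZMod.lift_coe]
  simp

instance decidableQDistinct {n : ℕ} (q : Quad n) : Decidable (qDistinct q) :=
  inferInstanceAs (Decidable (_ = 4))

def quadRot {n : ℕ} : Quad n → Quad n
  | (i, j, k, l) => (j, k, l, i)

def quadRev {n : ℕ} : Quad n → Quad n
  | (i, j, k, l) => (l, k, j, i)

section Dihedral

variable {n : ℕ}

theorem qFinset_quadRot (q : Quad n) : qFinset (quadRot q) = qFinset q := by
  obtain ⟨i, j, k, l⟩ := q
  ext x
  simp only [quadRot, qFinset, Finset.mem_insert, Finset.mem_singleton]
  tauto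

theorem qFinset_quadRev (q : Quad n) : qFinset (quadRev q) = qFinset q := by
  obtain ⟨i, j, k, l⟩ := q
  ext x
  simp only [quadRev, qFinset, Finset.mem_insert, Finset.mem_singleton]
  tauto

theorem qDistinct_quadRot_iff {q : Quad n} : qDistinct (quadRot q) ↔ qDistinct q := by
  rw [qDistinct, qDistinct, qFinset_quadRot]

theorem qDistinct_quadRev_iff {q : Quad n} : qDistinct (quadRev q) ↔ qDistinct q := by
  rw [qDistinct, qDistinct, qFinset_quadRev]

theorem gg_eq_one {q : Quad n} (hq : ¬ qDistinct q) : gg q = 1 :=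
  PresentedGroup.one_of_mem (Or.inl (Or.inl (Or.inl (Or.inl ⟨q, hq, rfl⟩))))

theorem gg_sq {q : Quad n} (hq : qDistinct q) : gg q ^ 2 = 1 := by
  rw [sq]
  exact PresentedGroup.one_of_mem (Or.inl (Or.inl (Or.inl (Or.inr ⟨q, hq, rfl⟩))))

theorem gg_quadRot {q : Quad n} (hq : qDistinct q) : gg (quadRot q) = gg q := by
  obtain ⟨i, j, k, l⟩ := q
  exact (PresentedGroup.mk_eq_mk_of_mul_inv_mem (Or.inr ⟨i, j, k, l, hq, Or.inl rfl⟩)).symm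

theorem gg_quadRev {q : Quad n} (hq : qDistinct q) : gg (quadRev q) = gg q := by
  obtain ⟨i, j, k, l⟩ := q
  exact (PresentedGroup.mk_eq_mk_of_mul_inv_mem (Or.inr ⟨i, j, k, l, hq, Or.inr rfl⟩)).symm

theorem gg_iterate_quadRot {q : Quad n} (hq : qDistinct q) (a : ℕ) :
    gg (quadRot^[a] q) = gg q := by
  induction a generalizing q with
  | zero => rfl
  | succ a ih =>
    rw [Function.iterate_succ_apply, ih (qDistinct_quadRot_iff.mpr hq), gg_quadRot hq]

end Dihedral

theorem qFinset_eq_univ {q : Quad 4} (hq : qDistinct q) : qFinset q = Finset.univ :=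
  Finset.eq_univ_of_card _ hq

theorem mem_gammaRels_four {r : FreeGroup (Quad 4)} (hr : r ∈ gammaRels 4) :
    (∃ q, ¬ qDistinct q ∧ r = .of q) ∨ (∃ q, qDistinct q ∧ r = .of q * .of q) ∨
      ∃ q, qDistinct q ∧ (r = .of q * (.of (quadRot q))⁻¹ ∨ r = .of q * (.of (quadRev q))⁻¹) := by
  rcases hr with ((((h | h) | ⟨q, s, hq, hs, hcard, -⟩) | ⟨i, j, k, l, m, hcard, -⟩) |
    ⟨i, j, k, l, hq, h⟩)
  · exact Or.inl h
  · exact Or.inr (Or.inl h)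
  · rw [qFinset_eq_univ hq, qFinset_eq_univ hs] at hcard
    simp at hcard
  · have := Finset.card_le_univ ({i, j, k, l, m} : Finset (Fin 4))
    simp [hcard] at this
  · exact Or.inr (Or.inr ⟨(i, j, k, l), hq, h⟩)

section Lift

variable {G : Type*} [Group G] (f : Quad 4 → G) (h_one : ∀ q, ¬ qDistinct q → f q = 1)
  (h_sq : ∀ q, qDistinct q → f q ^ 2 = 1) (h_rot : ∀ q, qDistinct q → f (quadRot q) = f q)
  (h_rev : ∀ q, qDistinct q → f (quadRev q) = f q)

def gammaFourLift : Gamma 4 →* G :=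
  PresentedGroup.toGroup (f := f) fun r hr => by
    rcases mem_gammaRels_four hr with ⟨q, hq, rfl⟩ | ⟨q, hq, rfl⟩ | ⟨q, hq, rfl | rfl⟩
    · simp [h_one q hq]
    · simp [← sq, h_sq q hq]
    · simp [h_rot q hq]
    · simp [h_rev q hq]

theorem gammaFourLift_gg (q : Quad 4) : gammaFourLift f h_one h_sq h_rot h_rev (gg q) = f q :=
  PresentedGroup.toGroup.of _

end Lift

/-- The three perfect matchings `{{i, k}, {j, l}}` of `{0, 1, 2, 3}`, numbered so that
`factorGen c` has class `c`. -/
def diagonalClass (q : Quad 4) : Fin 3 :=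
  let d : Finset (Fin 4) := {q.1, q.2.2.1}
  if d = {0, 2} ∨ d = {1, 3} then 0 else if d = {0, 1} ∨ d = {2, 3} then 1 else 2

def factorGen : Fin 3 → Quad 4 := ![(0, 1, 2, 3), (0, 2, 1, 3), (0, 1, 3, 2)]

set_option maxRecDepth 100000 in
theorem diagonalClass_quadRot (q : Quad 4) (hq : qDistinct q) :
    diagonalClass (quadRot q) = diagonalClass q := by
  revert q; decide

set_option maxRecDepth 100000 in
theorem diagonalClass_quadRev (q : Quad 4) (hq : qDistinct q) :
    diagonalClass (quadRev q) = diagonalClass q := by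
  revert q; decide

theorem qDistinct_factorGen (c : Fin 3) : qDistinct (factorGen c) := by
  revert c; decide

theorem diagonalClass_factorGen (c : Fin 3) : diagonalClass (factorGen c) = c := by
  revert c; decide

set_option maxRecDepth 100000 in
theorem exists_iterate_quadRot_eq_factorGen (q : Quad 4) (hq : qDistinct q) :
    ∃ a : Fin 4, quadRot^[a] q = factorGen (diagonalClass q) ∨
      quadRot^[a] (quadRev q) = factorGen (diagonalClass q) := by
  revert q; decide

theorem gg_eq_gg_factorGen {q : Quad 4} (hq : qDistinct q) :
    gg q = gg (factorGen (diagonalClass q)) := by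
  obtain ⟨a, h | h⟩ := exists_iterate_quadRot_eq_factorGen q hq
  · rw [← h, gg_iterate_quadRot hq]
  · rw [← h, gg_iterate_quadRot (qDistinct_quadRev_iff.mpr hq), gg_quadRev hq]

abbrev FreeProdZ2 : Type := Monoid.CoprodI fun _ : Fin 3 => Multiplicative (ZMod 2)

noncomputable def factorLetter (q : Quad 4) : FreeProdZ2 :=
  if qDistinct q then Monoid.CoprodI.of (i := diagonalClass q) (Multiplicative.ofAdd 1) else 1

noncomputable def toFactors : Gamma 4 →* FreeProdZ2 :=
  gammaFourLift factorLetter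
    (fun q hq => by rw [factorLetter, if_neg hq])
    (fun q hq => by
      rw [factorLetter, if_pos hq, ← map_pow,
        show Multiplicative.ofAdd (1 : ZMod 2) ^ 2 = 1 from rfl, map_one])
    (fun q hq => by
      rw [factorLetter, factorLetter, if_pos hq, if_pos (qDistinct_quadRot_iff.mpr hq),
        diagonalClass_quadRot q hq])
    (fun q hq => by
      rw [factorLetter, factorLetter, if_pos hq, if_pos (qDistinct_quadRev_iff.mpr hq),
        diagonalClass_quadRev q hq])

noncomputable def ofFactors : FreeProdZ2 →* Gamma 4 :=
  Monoid.CoprodI.lift fun c => zmodTwoHom (gg (factorGen c)) (gg_sq (qDistinct_factorGen c))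

theorem toFactors_gg (q : Quad 4) : toFactors (gg q) = factorLetter q :=
  gammaFourLift_gg ..

theorem toFactors_gg_factorGen (c : Fin 3) :
    toFactors (gg (factorGen c)) = Monoid.CoprodI.of (i := c) (Multiplicative.ofAdd 1) := by
  rw [toFactors_gg, factorLetter, if_pos (qDistinct_factorGen c), diagonalClass_factorGen]

theorem ofFactors_of (c : Fin 3) :
    ofFactors (Monoid.CoprodI.of (i := c) (Multiplicative.ofAdd 1)) = gg (factorGen c) := by
  rw [ofFactors, Monoid.CoprodI.lift_of, zmodTwoHom_ofAdd_one]

theorem ofFactors_comp_toFactors : ofFactors.comp toFactors = MonoidHom.id (Gamma 4) := by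
  refine PresentedGroup.ext fun q => ?_
  change ofFactors (toFactors (gg q)) = gg q
  by_cases hq : qDistinct q
  · rw [toFactors_gg, factorLetter, if_pos hq, ofFactors_of, ← gg_eq_gg_factorGen hq]
  · rw [toFactors_gg, factorLetter, if_neg hq, map_one, gg_eq_one hq]

theorem toFactors_comp_ofFactors : toFactors.comp ofFactors = MonoidHom.id FreeProdZ2 := by
  refine Monoid.CoprodI.ext_hom _ _ fun c => MonoidHom.ext fun x => ?_
  obtain rfl | rfl : x = 1 ∨ x = Multiplicative.ofAdd 1 := by revert x; decide
  · simp only [map_one]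
  · change toFactors (ofFactors (Monoid.CoprodI.of (i := c) (Multiplicative.ofAdd 1))) = _
    rw [ofFactors_of, toFactors_gg_factorGen]
    rfl

noncomputable def gammaFourEquiv : Gamma 4 ≃* FreeProdZ2 :=
  MonoidHom.toMulEquiv toFactors ofFactors ofFactors_comp_toFactors toFactors_comp_ofFactors

/-- Indices are 0-based: `gg (0, 1, 2, 3)` is the generator `(1234)`. -/
theorem gamma_four_free_product :
    ∃ e : Gamma 4 ≃* Monoid.CoprodI (fun _ : Fin 3 => Multiplicative (ZMod 2)),
      e (gg ((0 : Fin 4), (1 : Fin 4), (2 : Fin 4), (3 : Fin 4))) =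
        Monoid.CoprodI.of (i := (0 : Fin 3)) (Multiplicative.ofAdd (1 : ZMod 2)) ∧
      e (gg ((0 : Fin 4), (2 : Fin 4), (1 : Fin 4), (3 : Fin 4))) =
        Monoid.CoprodI.of (i := (1 : Fin 3)) (Multiplicative.ofAdd (1 : ZMod 2)) ∧
      e (gg ((0 : Fin 4), (1 : Fin 4), (3 : Fin 4), (2 : Fin 4))) =
        Monoid.CoprodI.of (i := (2 : Fin 3)) (Multiplicative.ofAdd (1 : ZMod 2)) := by
  exact ⟨gammaFourEquiv, toFactors_gg_factorGen 0, toFactors_gg_factorGen 1,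
    toFactors_gg_factorGen 2⟩
end

section
/- For every n ≥ 4, every generating set of the group Γ_n^4 has at least N_n = C(n,3) − 1 elements; consequently the minimum number of generators of Γ_n^4 is exactly N_n. -/
namespace GammaProof
variable {n : ℕ} {m : ℕ}

lemma nodup_of_card {α : Type*} [DecidableEq α] (L : List α) (h : L.toFinset.card = L.length) :
    L.Nodup := by
  rw [List.card_toFinset] at h
  have := List.dedup_sublist L
  have := this.eq_of_length h
  rw [← List.dedup_eq_self]
  exact this

lemma card_of_nodup {α : Type*} [DecidableEq α] (L : List α) (h : L.Nodup) :
    L.toFinset.card = L.length := by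
  rw [List.card_toFinset, List.dedup_eq_self.mpr h]

lemma quad_finset_eq (i j k l : Fin n) :
    ({i, j, k, l} : Finset (Fin n)) = ([i, j, k, l] : List (Fin n)).toFinset := by
  simp

lemma card4_iff (i j k l : Fin n) :
    ({i, j, k, l} : Finset (Fin n)).card = 4 ↔
      (i ≠ j ∧ i ≠ k ∧ i ≠ l ∧ j ≠ k ∧ j ≠ l ∧ k ≠ l) := by
  rw [quad_finset_eq]
  constructor
  · intro h
    have := nodup_of_card ([i,j,k,l] : List (Fin n)) (h.trans rfl)
    simp only [List.nodup_cons, List.mem_cons, List.not_mem_nil] at this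
    tauto
  · intro h
    have : ([i,j,k,l] : List (Fin n)).Nodup := by
      simp only [List.nodup_cons, List.mem_cons, List.not_mem_nil]
      tauto
    exact (card_of_nodup _ this).trans rfl

lemma card5_iff (i j k l m : Fin n) :
    ({i, j, k, l, m} : Finset (Fin n)).card = 5 ↔
      (i ≠ j ∧ i ≠ k ∧ i ≠ l ∧ i ≠ m ∧ j ≠ k ∧ j ≠ l ∧ j ≠ m ∧ k ≠ l ∧ k ≠ m ∧ l ≠ m) := by
  rw [show ({i,j,k,l,m} : Finset (Fin n)) = ([i,j,k,l,m] : List (Fin n)).toFinset by simp]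
  constructor
  · intro h
    have := nodup_of_card ([i,j,k,l,m] : List (Fin n)) (h.trans rfl)
    simp only [List.nodup_cons, List.mem_cons, List.not_mem_nil] at this
    tauto
  · intro h
    have : ([i,j,k,l,m] : List (Fin n)).Nodup := by
      simp only [List.nodup_cons, List.mem_cons, List.not_mem_nil]
      tauto
    exact (card_of_nodup _ this).trans rfl

lemma qDistinct_iff (i j k l : Fin n) :
    qDistinct (i, j, k, l) ↔ (i ≠ j ∧ i ≠ k ∧ i ≠ l ∧ j ≠ k ∧ j ≠ l ∧ k ≠ l) := by
  unfold qDistinct qFinset; exact card4_iff i j k l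

-- sorted triple-set equality
lemma pair_eq_sorted {a b u v : Fin n} (hab : a < b) (huv : u < v)
    (h : ({a, b} : Finset (Fin n)) = {u, v}) : a = u ∧ b = v := by
  have := Finset.ext_iff.mp h
  have ha := (this a).mp (by simp)
  have hb := (this b).mp (by simp)
  have hu := (this u).mpr (by simp)
  simp only [Finset.mem_insert, Finset.mem_singleton] at ha hb hu
  rcases ha with rfl|rfl
  · rcases hb with rfl|rfl
    · exact absurd hab (lt_irrefl _)
    · exact ⟨rfl, rfl⟩
  · rcases hb with rfl|rfl
    · exact absurd (hab.trans huv) (lt_irrefl _)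
    · exact absurd hab (lt_irrefl _)

lemma triple_eq_sorted {a b c u v w : Fin n} (h1 : a < b) (h2 : b < c)
    (h3 : u < v) (h4 : v < w)
    (h : ({a, b, c} : Finset (Fin n)) = {u, v, w}) : a = u ∧ b = v ∧ c = w := by
  have hmem := Finset.ext_iff.mp h
  have ha := (hmem a).mp (by simp)
  have hb := (hmem b).mp (by simp)
  have hc := (hmem c).mp (by simp)
  have hu := (hmem u).mpr (by simp)
  have hv := (hmem v).mpr (by simp)
  have hw := (hmem w).mpr (by simp)
  simp only [Finset.mem_insert, Finset.mem_singleton] at ha hb hc hu hv hw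
  have V : ∀ x y : Fin n, x = y → x.1 = y.1 := fun _ _ h => congrArg Fin.val h
  have ha' : a.1 = u.1 ∨ a.1 = v.1 ∨ a.1 = w.1 := by rcases ha with h|h|h <;> simp [h]
  have hb' : b.1 = u.1 ∨ b.1 = v.1 ∨ b.1 = w.1 := by rcases hb with h|h|h <;> simp [h]
  have hc' : c.1 = u.1 ∨ c.1 = v.1 ∨ c.1 = w.1 := by rcases hc with h|h|h <;> simp [h]
  have hu' : u.1 = a.1 ∨ u.1 = b.1 ∨ u.1 = c.1 := by rcases hu with h|h|h <;> simp [h]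
  have hv' : v.1 = a.1 ∨ v.1 = b.1 ∨ v.1 = c.1 := by rcases hv with h|h|h <;> simp [h]
  have hw' : w.1 = a.1 ∨ w.1 = b.1 ∨ w.1 = c.1 := by rcases hw with h|h|h <;> simp [h]
  have h1' : a.1 < b.1 := h1
  have h2' : b.1 < c.1 := h2
  have h3' : u.1 < v.1 := h3
  have h4' : v.1 < w.1 := h4
  refine ⟨Fin.val_injective ?_, Fin.val_injective ?_, Fin.val_injective ?_⟩ <;> omega


instance qdd : ∀ q : Quad n, Decidable (qDistinct q) := fun q => by
  unfold qDistinct; infer_instance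

/-- target abelian group -/
abbrev G (n : ℕ) := Finset (Fin n) → ZMod 2

def δ (s : Finset (Fin n)) : G n := fun t => if t = s then 1 else 0

lemma addself (x : G n) : x + x = 0 := by
  funext t
  have : (x t + x t : ZMod 2) = 2 * x t := by ring
  rw [Pi.add_apply, this, show (2 : ZMod 2) = 0 from rfl, zero_mul, Pi.zero_apply]

def fv (q : Quad n) : G n :=
  δ {q.1, q.2.2.1} + δ {q.2.1, q.2.2.2} + δ {q.1, q.2.1, q.2.2.1} + δ {q.1, q.2.1, q.2.2.2}
    + δ {q.1, q.2.2.1, q.2.2.2} + δ {q.2.1, q.2.2.1, q.2.2.2}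

lemma t1 (x y z : Fin n) : ({x, y, z} : Finset (Fin n)) = {y, x, z} := Finset.insert_comm x y {z}
lemma t2 (x y z : Fin n) : ({x, y, z} : Finset (Fin n)) = {x, z, y} := by
  rw [Finset.pair_comm y z]

lemma fv_pentagon (i j k l m : Fin n) :
    fv (i,j,k,l) + fv (i,j,l,m) + fv (j,k,l,m) + fv (i,j,k,m) + fv (i,k,l,m) = 0 := by
  show (δ {i,k} + δ {j,l} + δ {i,j,k} + δ {i,j,l} + δ {i,k,l} + δ {j,k,l})
      + (δ {i,l} + δ {j,m} + δ {i,j,l} + δ {i,j,m} + δ {i,l,m} + δ {j,l,m})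
      + (δ {j,l} + δ {k,m} + δ {j,k,l} + δ {j,k,m} + δ {j,l,m} + δ {k,l,m})
      + (δ {i,k} + δ {j,m} + δ {i,j,k} + δ {i,j,m} + δ {i,k,m} + δ {j,k,m})
      + (δ {i,l} + δ {k,m} + δ {i,k,l} + δ {i,k,m} + δ {i,l,m} + δ {k,l,m}) = 0
  have H := addself (n := n)
  calc (δ {i,k} + δ {j,l} + δ {i,j,k} + δ {i,j,l} + δ {i,k,l} + δ {j,k,l})
      + (δ {i,l} + δ {j,m} + δ {i,j,l} + δ {i,j,m} + δ {i,l,m} + δ {j,l,m})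
      + (δ {j,l} + δ {k,m} + δ {j,k,l} + δ {j,k,m} + δ {j,l,m} + δ {k,l,m})
      + (δ {i,k} + δ {j,m} + δ {i,j,k} + δ {i,j,m} + δ {i,k,m} + δ {j,k,m})
      + (δ {i,l} + δ {k,m} + δ {i,k,l} + δ {i,k,m} + δ {i,l,m} + δ {k,l,m})
      = (δ {i,k} + δ {i,k}) + ((δ {j,l} + δ {j,l}) + ((δ {i,l} + δ {i,l})
        + ((δ {j,m} + δ {j,m}) + ((δ {k,m} + δ {k,m}) + ((δ {i,j,k} + δ {i,j,k})
        + ((δ {i,j,l} + δ {i,j,l}) + ((δ {i,k,l} + δ {i,k,l}) + ((δ {j,k,l} + δ {j,k,l})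
        + ((δ {i,j,m} + δ {i,j,m}) + ((δ {i,l,m} + δ {i,l,m}) + ((δ {j,l,m} + δ {j,l,m})
        + ((δ {j,k,m} + δ {j,k,m}) + ((δ {k,l,m} + δ {k,l,m})
        + (δ {i,k,m} + δ {i,k,m})))))))))))))) := by abel
    _ = 0 := by simp only [H, add_zero, zero_add]

lemma fv_rot (i j k l : Fin n) : fv (j, k, l, i) = fv (i, j, k, l) := by
  show δ {j,l} + δ {k,i} + δ {j,k,l} + δ {j,k,i} + δ {j,l,i} + δ {k,l,i}
      = δ {i,k} + δ {j,l} + δ {i,j,k} + δ {i,j,l} + δ {i,k,l} + δ {j,k,l}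
  rw [show ({j,k,i} : Finset (Fin n)) = {i,j,k} by rw [t2 j k i, t1 j i k],
    show ({j,l,i} : Finset (Fin n)) = {i,j,l} by rw [t2 j l i, t1 j i l],
    show ({k,l,i} : Finset (Fin n)) = {i,k,l} by rw [t2 k l i, t1 k i l],
    Finset.pair_comm k i]
  abel

lemma fv_rev (i j k l : Fin n) : fv (l, k, j, i) = fv (i, j, k, l) := by
  show δ {l,j} + δ {k,i} + δ {l,k,j} + δ {l,k,i} + δ {l,j,i} + δ {k,j,i}
      = δ {i,k} + δ {j,l} + δ {i,j,k} + δ {i,j,l} + δ {i,k,l} + δ {j,k,l}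
  rw [show ({l,k,j} : Finset (Fin n)) = {j,k,l} by rw [t1 l k j, t2 k l j, t1 k j l],
    show ({l,k,i} : Finset (Fin n)) = {i,k,l} by rw [t1 l k i, t2 k l i, t1 k i l],
    show ({l,j,i} : Finset (Fin n)) = {i,j,l} by rw [t1 l j i, t2 j l i, t1 j i l],
    show ({k,j,i} : Finset (Fin n)) = {i,j,k} by rw [t1 k j i, t2 j k i, t1 j i k],
    Finset.pair_comm l j, Finset.pair_comm k i]
  abel

lemma qFinset_rot (i j k l : Fin n) : qFinset (j, k, l, i) = qFinset (i, j, k, l) := by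
  unfold qFinset; ext x; simp only [Finset.mem_insert, Finset.mem_singleton]; tauto

lemma qFinset_rev (i j k l : Fin n) : qFinset (l, k, j, i) = qFinset (i, j, k, l) := by
  unfold qFinset; ext x; simp only [Finset.mem_insert, Finset.mem_singleton]; tauto

lemma qDistinct_rot {i j k l : Fin n} (h : qDistinct (i, j, k, l)) : qDistinct (j, k, l, i) := by
  unfold qDistinct at *; rw [qFinset_rot]; exact h

lemma qDistinct_rev {i j k l : Fin n} (h : qDistinct (i, j, k, l)) : qDistinct (l, k, j, i) := by
  unfold qDistinct at *; rw [qFinset_rev]; exact h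

def fMap (q : Quad n) : Multiplicative (G n) :=
  if qDistinct q then Multiplicative.ofAdd (fv q) else 1

lemma card5_distincts {i j k l m : Fin n} (h : ({i, j, k, l, m} : Finset (Fin n)).card = 5) :
    qDistinct (i,j,k,l) ∧ qDistinct (i,j,l,m) ∧ qDistinct (j,k,l,m) ∧ qDistinct (i,j,k,m)
      ∧ qDistinct (i,k,l,m) := by
  obtain ⟨h1, h2, h3, h4, h5, h6, h7, h8, h9, h10⟩ := (card5_iff i j k l m).mp h
  refine ⟨(qDistinct_iff _ _ _ _).mpr ?_, (qDistinct_iff _ _ _ _).mpr ?_,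
    (qDistinct_iff _ _ _ _).mpr ?_, (qDistinct_iff _ _ _ _).mpr ?_,
    (qDistinct_iff _ _ _ _).mpr ?_⟩ <;> tauto

lemma relsCheck : ∀ r ∈ gammaRels n, FreeGroup.lift (fMap (n := n)) r = 1 := by
  rintro r (((((⟨q, hq, rfl⟩ | ⟨q, hq, rfl⟩) | ⟨q, q', hq, hq', hint, rfl⟩) |
    ⟨i, j, k, l, m, hc, rfl⟩) | ⟨i, j, k, l, hd, (rfl | rfl)⟩))
  · simp only [FreeGroup.lift_apply_of, fMap, if_neg hq]
  · simp only [map_mul, FreeGroup.lift_apply_of, fMap, if_pos hq, ← ofAdd_add, addself, ofAdd_zero]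
  · simp only [map_mul, map_inv, FreeGroup.lift_apply_of]
    rw [mul_comm (fMap q)]
    group
  · obtain ⟨h1, h2, h3, h4, h5⟩ := card5_distincts hc
    simp only [map_mul, FreeGroup.lift_apply_of, fMap, if_pos h1, if_pos h2, if_pos h3, if_pos h4,
      if_pos h5, ← ofAdd_add]
    rw [show fv (i,j,k,l) + fv (i,j,l,m) + fv (j,k,l,m) + fv (i,j,k,m) + fv (i,k,l,m) = 0 from
      fv_pentagon i j k l m, ofAdd_zero]
  · simp only [map_mul, map_inv, FreeGroup.lift_apply_of, fMap, if_pos hd, if_pos (qDistinct_rot hd),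
      fv_rot, mul_inv_cancel]
  · simp only [map_mul, map_inv, FreeGroup.lift_apply_of, fMap, if_pos hd, if_pos (qDistinct_rev hd),
      fv_rev, mul_inv_cancel]

noncomputable def phi : Gamma n →* Multiplicative (G n) := PresentedGroup.toGroup relsCheck

lemma phi_gg (q : Quad n) : phi (gg q) = fMap q := PresentedGroup.toGroup.of relsCheck


lemma vne {x y : Fin n} (h : x ≠ y) : x.1 ≠ y.1 := fun hh => h (Fin.val_injective hh)

def z0 : Fin (m + 4) := ⟨0, by omega⟩
def z1 : Fin (m + 4) := ⟨1, by omega⟩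
def z2 : Fin (m + 4) := ⟨2, by omega⟩

def q3 (t : Fin (m+4) × Fin (m+4) × Fin (m+4)) : Quad (m+4) :=
  if t.1.1 ≠ 0 then (z0, t.2.1, t.1, t.2.2)
  else if t.2.1.1 ≠ 1 then (z0, z1, t.2.1, t.2.2)
  else (z0, z1, t.2.2, z2)

def IFin (m : ℕ) : Finset (Fin (m+4) × Fin (m+4) × Fin (m+4)) :=
  Finset.univ.filter (fun t => t.1 < t.2.1 ∧ t.2.1 < t.2.2 ∧
    ¬(t.1.1 = 0 ∧ t.2.1.1 = 1 ∧ t.2.2.1 = 2))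

lemma mem_IFin {a b c : Fin (m+4)} (ht : (a, b, c) ∈ IFin m) :
    a.1 < b.1 ∧ b.1 < c.1 ∧ ¬(a.1 = 0 ∧ b.1 = 1 ∧ c.1 = 2) := by
  simp only [IFin, Finset.mem_filter, Finset.mem_univ, true_and] at ht
  exact ⟨ht.1, ht.2.1, ht.2.2⟩

lemma z0v : (z0 : Fin (m+4)).1 = 0 := rfl
lemma z1v : (z1 : Fin (m+4)).1 = 1 := rfl
lemma z2v : (z2 : Fin (m+4)).1 = 2 := rfl

noncomputable def vfam (t : ↥(IFin m)) : G (m+4) := fv (q3 t.1)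

/- helpers -/
lemma fne {x y : Fin (m+4)} (h : x.1 ≠ y.1) : x ≠ y := fun hh => h (congrArg Fin.val hh)
lemma zne {x : Fin (m+4)} {s X : Finset (Fin (m+4))} (hX : x ∈ X) (hs : x ∉ s) : s ≠ X :=
  fun h => hs (h ▸ hX)
lemma znem {x : Fin (m+4)} {s X : Finset (Fin (m+4))} (hx : x ∈ s) (hX : x ∉ X) : s ≠ X :=
  fun h => hX (h ▸ hx)
lemma cne {s X : Finset (Fin (m+4))} (h : s.card ≠ X.card) : s ≠ X :=
  fun h' => h (by rw [h'])
lemma nm2 {x u v : Fin (m+4)} (h1 : x.1 ≠ u.1) (h2 : x.1 ≠ v.1) :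
    x ∉ ({u, v} : Finset (Fin (m+4))) := by
  simp only [Finset.mem_insert, Finset.mem_singleton, not_or]
  exact ⟨fne h1, fne h2⟩
lemma nm3 {x u v w : Fin (m+4)} (h1 : x.1 ≠ u.1) (h2 : x.1 ≠ v.1) (h3 : x.1 ≠ w.1) :
    x ∉ ({u, v, w} : Finset (Fin (m+4))) := by
  simp only [Finset.mem_insert, Finset.mem_singleton, not_or]
  exact ⟨fne h1, fne h2, fne h3⟩
lemma cp {x y : Fin (m+4)} (h : x.1 ≠ y.1) : ({x, y} : Finset (Fin (m+4))).card = 2 :=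
  Finset.card_pair (fne h)
lemma ct {x y z : Fin (m+4)} (h1 : x.1 ≠ y.1) (h2 : x.1 ≠ z.1) (h3 : y.1 ≠ z.1) :
    ({x, y, z} : Finset (Fin (m+4))).card = 3 := by
  rw [Finset.card_insert_of_notMem (nm2 h1 h2), cp h3]
lemma insert_z0_inj {A B : Finset (Fin (m+4))} (hA : z0 ∉ A) (hB : z0 ∉ B)
    (h : insert z0 A = insert z0 B) : A = B := by
  rw [← Finset.erase_insert hA, ← Finset.erase_insert hB, h]

lemma q3_1 {a b c : Fin (m+4)} (h : a.1 ≠ 0) : q3 (a, b, c) = (z0, b, a, c) := by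
  simp [q3, h]
lemma q3_2 {a b c : Fin (m+4)} (h : a.1 = 0) (h' : b.1 ≠ 1) : q3 (a, b, c) = (z0, z1, b, c) := by
  simp [q3, h, h']
lemma q3_3 {a b c : Fin (m+4)} (h : a.1 = 0) (h' : b.1 = 1) : q3 (a, b, c) = (z0, z1, c, z2) := by
  simp [q3, h, h']


lemma fv_zero {q : Quad (m+4)} {s : Finset (Fin (m+4))}
    (h1 : s ≠ {q.1, q.2.2.1}) (h2 : s ≠ {q.2.1, q.2.2.2})
    (h3 : s ≠ {q.1, q.2.1, q.2.2.1}) (h4 : s ≠ {q.1, q.2.1, q.2.2.2})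
    (h5 : s ≠ {q.1, q.2.2.1, q.2.2.2}) (h6 : s ≠ {q.2.1, q.2.2.1, q.2.2.2}) :
    fv q s = 0 := by
  simp only [fv, Pi.add_apply, δ]
  rw [if_neg h1, if_neg h2, if_neg h3, if_neg h4, if_neg h5, if_neg h6]
  norm_num

lemma fv_one2 {q : Quad (m+4)} {s : Finset (Fin (m+4))}
    (h1 : s ≠ {q.1, q.2.2.1}) (h2 : s = {q.2.1, q.2.2.2})
    (h3 : s ≠ {q.1, q.2.1, q.2.2.1}) (h4 : s ≠ {q.1, q.2.1, q.2.2.2})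
    (h5 : s ≠ {q.1, q.2.2.1, q.2.2.2}) (h6 : s ≠ {q.2.1, q.2.2.1, q.2.2.2}) :
    fv q s = 1 := by
  simp only [fv, Pi.add_apply, δ]
  rw [if_neg h1, if_pos h2, if_neg h3, if_neg h4, if_neg h5, if_neg h6]
  norm_num

lemma fv_one5 {q : Quad (m+4)} {s : Finset (Fin (m+4))}
    (h1 : s ≠ {q.1, q.2.2.1}) (h2 : s ≠ {q.2.1, q.2.2.2})
    (h3 : s ≠ {q.1, q.2.1, q.2.2.1}) (h4 : s ≠ {q.1, q.2.1, q.2.2.2})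
    (h5 : s = {q.1, q.2.2.1, q.2.2.2}) (h6 : s ≠ {q.2.1, q.2.2.1, q.2.2.2}) :
    fv q s = 1 := by
  simp only [fv, Pi.add_apply, δ]
  rw [if_neg h1, if_neg h2, if_neg h3, if_neg h4, if_pos h5, if_neg h6]
  norm_num

lemma fv_one6 {q : Quad (m+4)} {s : Finset (Fin (m+4))}
    (h1 : s ≠ {q.1, q.2.2.1}) (h2 : s ≠ {q.2.1, q.2.2.2})
    (h3 : s ≠ {q.1, q.2.1, q.2.2.1}) (h4 : s ≠ {q.1, q.2.1, q.2.2.2})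
    (h5 : s ≠ {q.1, q.2.2.1, q.2.2.2}) (h6 : s = {q.2.1, q.2.2.1, q.2.2.2}) :
    fv q s = 1 := by
  simp only [fv, Pi.add_apply, δ]
  rw [if_neg h1, if_neg h2, if_neg h3, if_neg h4, if_neg h5, if_pos h6]
  norm_num


lemma fv_zero' {a b c d : Fin (m+4)} {s : Finset (Fin (m+4))}
    (h1 : s ≠ {a, c}) (h2 : s ≠ {b, d}) (h3 : s ≠ {a, b, c}) (h4 : s ≠ {a, b, d})
    (h5 : s ≠ {a, c, d}) (h6 : s ≠ {b, c, d}) : fv (a, b, c, d) s = 0 :=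
  fv_zero h1 h2 h3 h4 h5 h6

lemma fv_one2' {a b c d : Fin (m+4)} {s : Finset (Fin (m+4))}
    (h1 : s ≠ {a, c}) (h2 : s = {b, d}) (h3 : s ≠ {a, b, c}) (h4 : s ≠ {a, b, d})
    (h5 : s ≠ {a, c, d}) (h6 : s ≠ {b, c, d}) : fv (a, b, c, d) s = 1 :=
  fv_one2 h1 h2 h3 h4 h5 h6

lemma fv_one5' {a b c d : Fin (m+4)} {s : Finset (Fin (m+4))}
    (h1 : s ≠ {a, c}) (h2 : s ≠ {b, d}) (h3 : s ≠ {a, b, c}) (h4 : s ≠ {a, b, d})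
    (h5 : s = {a, c, d}) (h6 : s ≠ {b, c, d}) : fv (a, b, c, d) s = 1 :=
  fv_one5 h1 h2 h3 h4 h5 h6

lemma fv_one6' {a b c d : Fin (m+4)} {s : Finset (Fin (m+4))}
    (h1 : s ≠ {a, c}) (h2 : s ≠ {b, d}) (h3 : s ≠ {a, b, c}) (h4 : s ≠ {a, b, d})
    (h5 : s ≠ {a, c, d}) (h6 : s = {b, c, d}) : fv (a, b, c, d) s = 1 :=
  fv_one6 h1 h2 h3 h4 h5 h6

lemma vfam_indep : LinearIndependent (ZMod 2) (vfam (m := m)) := by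
  haveI : Fact (Nat.Prime 2) := ⟨Nat.prime_two⟩
  rw [Fintype.linearIndependent_iff]
  intro g hsum
  have coord : ∀ s : Finset (Fin (m+4)), (∑ t : ↥(IFin m), g t * fv (q3 t.1) s) = 0 := by
    intro s
    have h2 := congrFun hsum s
    simpa [vfam, Finset.sum_apply] using h2
  have E1 : ∀ (a b c : Fin (m+4)) (hmem : (a,b,c) ∈ IFin m), 2 ≤ a.1 →
      g ⟨(a,b,c), hmem⟩ = 0 := by
    intro a b c hmem h2
    obtain ⟨hab, hbc, -⟩ := mem_IFin hmem
    have hz0 : z0 ∉ ({a, b, c} : Finset (Fin (m+4))) :=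
      nm3 (by rw [z0v]; omega) (by rw [z0v]; omega) (by rw [z0v]; omega)
    have hz1 : z1 ∉ ({a, b, c} : Finset (Fin (m+4))) :=
      nm3 (by rw [z1v]; omega) (by rw [z1v]; omega) (by rw [z1v]; omega)
    have hs3 : ({a, b, c} : Finset (Fin (m+4))).card = 3 :=
      ct (by omega) (by omega) (by omega)
    have key := coord {a, b, c}
    rw [Finset.sum_eq_single (⟨(a, b, c), hmem⟩ : ↥(IFin m))] at key
    · rw [q3_1 (by omega),
        fv_one6' (zne (by simp) hz0) (cne (by rw [hs3, cp (by omega)]; omega))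
          (zne (by simp) hz0) (zne (by simp) hz0) (zne (by simp) hz0) ((t1 b a c).symm),
        mul_one] at key
      exact key
    · rintro ⟨⟨a', b', c'⟩, hmem'⟩ - hne
      obtain ⟨hab', hbc', -⟩ := mem_IFin hmem'
      by_cases ha' : a'.1 = 0
      · by_cases hb' : b'.1 = 1
        · rw [q3_3 ha' hb', fv_zero' (zne (by simp) hz0) (zne (by simp) hz1)
            (zne (by simp) hz0) (zne (by simp) hz0) (zne (by simp) hz0)
            (zne (by simp) hz1), mul_zero]
        · rw [q3_2 ha' hb', fv_zero' (zne (by simp) hz0) (zne (by simp) hz1)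
            (zne (by simp) hz0) (zne (by simp) hz0) (zne (by simp) hz0)
            (zne (by simp) hz1), mul_zero]
      · by_cases h6 : ({a, b, c} : Finset (Fin (m+4))) = {b', a', c'}
        · rw [t1 b' a' c'] at h6
          obtain ⟨rfl, rfl, rfl⟩ := triple_eq_sorted (Fin.lt_def.mpr hab)
            (Fin.lt_def.mpr hbc) (Fin.lt_def.mpr hab') (Fin.lt_def.mpr hbc') h6
          exact absurd (Subtype.ext rfl) hne
        · rw [q3_1 ha', fv_zero' (zne (by simp) hz0)
            (cne (by rw [hs3, cp (by omega)]; omega))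
            (zne (by simp) hz0) (zne (by simp) hz0) (zne (by simp) hz0) h6, mul_zero]
    · intro h; exact absurd (Finset.mem_univ _) h
  have E2 : ∀ (a b c : Fin (m+4)) (hmem : (a,b,c) ∈ IFin m), a.1 = 1 →
      g ⟨(a,b,c), hmem⟩ = 0 := by
    intro a b c hmem h2
    obtain ⟨hab, hbc, -⟩ := mem_IFin hmem
    have hz0 : z0 ∉ ({b, c} : Finset (Fin (m+4))) :=
      nm2 (by rw [z0v]; omega) (by rw [z0v]; omega)
    have hz1 : z1 ∉ ({b, c} : Finset (Fin (m+4))) :=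
      nm2 (by rw [z1v]; omega) (by rw [z1v]; omega)
    have hs2 : ({b, c} : Finset (Fin (m+4))).card = 2 := cp (by omega)
    have key := coord {b, c}
    rw [Finset.sum_eq_single (⟨(a, b, c), hmem⟩ : ↥(IFin m))] at key
    · rw [q3_1 (by omega),
        fv_one2' (zne (by simp) hz0) rfl (zne (by simp) hz0) (zne (by simp) hz0)
          (zne (by simp) hz0)
          (cne (by rw [hs2, ct (by omega) (by omega) (by omega)]; omega)),
        mul_one] at key
      exact key
    · rintro ⟨⟨a', b', c'⟩, hmem'⟩ - hne
      obtain ⟨hab', hbc', -⟩ := mem_IFin hmem'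
      by_cases ha' : a'.1 = 0
      · by_cases hb' : b'.1 = 1
        · rw [q3_3 ha' hb', fv_zero' (zne (by simp) hz0) (zne (by simp) hz1)
            (zne (by simp) hz0) (zne (by simp) hz0) (zne (by simp) hz0)
            (zne (by simp) hz1), mul_zero]
        · rw [q3_2 ha' hb', fv_zero' (zne (by simp) hz0) (zne (by simp) hz1)
            (zne (by simp) hz0) (zne (by simp) hz0) (zne (by simp) hz0)
            (zne (by simp) hz1), mul_zero]
      · by_cases hp : ({b, c} : Finset (Fin (m+4))) = {b', c'}
        · obtain ⟨rfl, rfl⟩ := pair_eq_sorted (Fin.lt_def.mpr hbc)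
            (Fin.lt_def.mpr hbc') hp
          rcases Nat.lt_or_ge a'.1 2 with hlt | hge
          · have : a' = a := Fin.val_injective (by omega)
            subst this
            exact absurd (Subtype.ext rfl) hne
          · rw [E1 a' b c hmem' hge, zero_mul]
        · rw [q3_1 ha', fv_zero' (zne (by simp) hz0) hp (zne (by simp) hz0)
            (zne (by simp) hz0) (zne (by simp) hz0)
            (cne (by rw [hs2, ct (by omega) (by omega) (by omega)]; omega)), mul_zero]
    · intro h; exact absurd (Finset.mem_univ _) h
  have E3 : ∀ (a b c : Fin (m+4)) (hmem : (a,b,c) ∈ IFin m), a.1 = 0 → 3 ≤ b.1 →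
      g ⟨(a,b,c), hmem⟩ = 0 := by
    intro a b c hmem h2a h2b
    obtain ⟨hab, hbc, -⟩ := mem_IFin hmem
    have hz1 : z1 ∉ ({z0, b, c} : Finset (Fin (m+4))) :=
      nm3 (by rw [z1v, z0v]; omega) (by rw [z1v]; omega) (by rw [z1v]; omega)
    have hz2 : z2 ∉ ({z0, b, c} : Finset (Fin (m+4))) :=
      nm3 (by rw [z2v, z0v]; omega) (by rw [z2v]; omega) (by rw [z2v]; omega)
    have hz0m : z0 ∈ ({z0, b, c} : Finset (Fin (m+4))) := by simp
    have hs3 : ({z0, b, c} : Finset (Fin (m+4))).card = 3 :=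
      ct (by rw [z0v]; omega) (by rw [z0v]; omega) (by omega)
    have key := coord {z0, b, c}
    rw [Finset.sum_eq_single (⟨(a, b, c), hmem⟩ : ↥(IFin m))] at key
    · rw [q3_2 (by omega) (by omega),
        fv_one5' (cne (by rw [hs3, cp (by rw [z0v]; omega)]; omega))
          (cne (by rw [hs3, cp (by rw [z1v]; omega)]; omega))
          (zne (by simp) hz1) (zne (by simp) hz1) rfl (zne (by simp) hz1),
        mul_one] at key
      exact key
    · rintro ⟨⟨a', b', c'⟩, hmem'⟩ - hne
      obtain ⟨hab', hbc', -⟩ := mem_IFin hmem'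
      by_cases ha' : a'.1 = 0
      · by_cases hb' : b'.1 = 1
        · rw [q3_3 ha' hb', fv_zero' (cne (by rw [hs3, cp (by rw [z0v]; omega)]; omega))
            (zne (by simp) hz1) (zne (by simp) hz1) (zne (by simp) hz1)
            (zne (by simp) hz2) (zne (by simp) hz1), mul_zero]
        · by_cases h5 : ({z0, b, c} : Finset (Fin (m+4))) = {z0, b', c'}
          · have h' := insert_z0_inj (nm2 (by rw [z0v]; omega) (by rw [z0v]; omega))
              (nm2 (by rw [z0v]; omega) (by rw [z0v]; omega)) h5
            obtain ⟨rfl, rfl⟩ := pair_eq_sorted (Fin.lt_def.mpr hbc)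
              (Fin.lt_def.mpr hbc') h'
            have : a' = a := Fin.val_injective (by omega)
            subst this
            exact absurd (Subtype.ext rfl) hne
          · rw [q3_2 ha' hb', fv_zero' (cne (by rw [hs3, cp (by rw [z0v]; omega)]; omega))
              (zne (by simp) hz1) (zne (by simp) hz1) (zne (by simp) hz1) h5
              (zne (by simp) hz1), mul_zero]
      · by_cases h3 : ({z0, b, c} : Finset (Fin (m+4))) = {z0, b', a'}
        · have h' := insert_z0_inj (nm2 (by rw [z0v]; omega) (by rw [z0v]; omega))
            (nm2 (by rw [z0v]; omega) (by rw [z0v]; omega)) h3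
          rw [Finset.pair_comm b' a'] at h'
          obtain ⟨rfl, rfl⟩ := pair_eq_sorted (Fin.lt_def.mpr hbc)
            (Fin.lt_def.mpr hab') h'
          rw [E1 b c c' hmem' (by omega), zero_mul]
        · by_cases h4 : ({z0, b, c} : Finset (Fin (m+4))) = {z0, b', c'}
          · have h' := insert_z0_inj (nm2 (by rw [z0v]; omega) (by rw [z0v]; omega))
              (nm2 (by rw [z0v]; omega) (by rw [z0v]; omega)) h4
            obtain ⟨rfl, rfl⟩ := pair_eq_sorted (Fin.lt_def.mpr hbc)
              (Fin.lt_def.mpr hbc') h'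
            rcases Nat.lt_or_ge a'.1 2 with hlt | hge
            · rw [E2 a' b c hmem' (by omega), zero_mul]
            · rw [E1 a' b c hmem' hge, zero_mul]
          · by_cases h5 : ({z0, b, c} : Finset (Fin (m+4))) = {z0, a', c'}
            · have h' := insert_z0_inj (nm2 (by rw [z0v]; omega) (by rw [z0v]; omega))
                (nm2 (by rw [z0v]; omega) (by rw [z0v]; omega)) h5
              obtain ⟨rfl, rfl⟩ := pair_eq_sorted (Fin.lt_def.mpr hbc)
                (Fin.lt_def.mpr (show a'.1 < c'.1 by omega)) h'
              rw [E1 b b' c hmem' (by omega), zero_mul]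
            · rw [q3_1 ha', fv_zero' (cne (by rw [hs3, cp (by rw [z0v]; omega)]; omega))
                (znem hz0m (nm2 (by rw [z0v]; omega) (by rw [z0v]; omega)))
                h3 h4 h5
                (znem hz0m (nm3 (by rw [z0v]; omega) (by rw [z0v]; omega)
                  (by rw [z0v]; omega))), mul_zero]
    · intro h; exact absurd (Finset.mem_univ _) h
  have E4 : ∀ (a b c : Fin (m+4)) (hmem : (a,b,c) ∈ IFin m), a.1 = 0 → b.1 = 2 →
      g ⟨(a,b,c), hmem⟩ = 0 := by
    intro a b c hmem h2a h2b
    obtain ⟨hab, hbc, -⟩ := mem_IFin hmem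
    have hz0 : z0 ∉ ({z1, c} : Finset (Fin (m+4))) :=
      nm2 (by rw [z0v, z1v]; omega) (by rw [z0v]; omega)
    have hz2 : z2 ∉ ({z1, c} : Finset (Fin (m+4))) :=
      nm2 (by rw [z2v, z1v]; omega) (by rw [z2v]; omega)
    have hz1m : z1 ∈ ({z1, c} : Finset (Fin (m+4))) := by simp
    have hs2 : ({z1, c} : Finset (Fin (m+4))).card = 2 := cp (by rw [z1v]; omega)
    have key := coord {z1, c}
    rw [Finset.sum_eq_single (⟨(a, b, c), hmem⟩ : ↥(IFin m))] at key
    · rw [q3_2 (by omega) (by omega),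
        fv_one2' (zne (by simp) hz0) rfl (zne (by simp) hz0) (zne (by simp) hz0)
          (zne (by simp) hz0)
          (cne (by rw [hs2, ct (by rw [z1v]; omega) (by rw [z1v]; omega) (by omega)]; omega)),
        mul_one] at key
      exact key
    · rintro ⟨⟨a', b', c'⟩, hmem'⟩ - hne
      obtain ⟨hab', hbc', -⟩ := mem_IFin hmem'
      by_cases ha' : a'.1 = 0
      · by_cases hb' : b'.1 = 1
        · rw [q3_3 ha' hb', fv_zero' (zne (by simp) hz0) (zne (by simp) hz2)
            (zne (by simp) hz0) (zne (by simp) hz0) (zne (by simp) hz0)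
            (zne (by simp) hz2), mul_zero]
        · by_cases hp : ({z1, c} : Finset (Fin (m+4))) = {z1, c'}
          · obtain ⟨-, rfl⟩ := pair_eq_sorted (Fin.lt_def.mpr (by rw [z1v]; omega))
              (Fin.lt_def.mpr (by rw [z1v]; omega)) hp
            by_cases hb2 : b'.1 = 2
            · have e1 : b' = b := Fin.val_injective (by omega)
              have e2 : a' = a := Fin.val_injective (by omega)
              subst e1; subst e2
              exact absurd (Subtype.ext rfl) hne
            · rw [E3 a' b' c hmem' ha' (by omega), zero_mul]
          · rw [q3_2 ha' hb', fv_zero' (zne (by simp) hz0) hp (zne (by simp) hz0)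
              (zne (by simp) hz0) (zne (by simp) hz0)
              (cne (by rw [hs2, ct (by rw [z1v]; omega) (by rw [z1v]; omega) (by omega)]; omega)), mul_zero]
      · rw [q3_1 ha', fv_zero' (zne (by simp) hz0)
          (znem hz1m (nm2 (by rw [z1v]; omega) (by rw [z1v]; omega)))
          (zne (by simp) hz0) (zne (by simp) hz0) (zne (by simp) hz0)
          (cne (by rw [hs2, ct (by omega) (by omega) (by omega)]; omega)), mul_zero]
    · intro h; exact absurd (Finset.mem_univ _) h
  have E5 : ∀ (a b c : Fin (m+4)) (hmem : (a,b,c) ∈ IFin m), a.1 = 0 → b.1 = 1 →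
      g ⟨(a,b,c), hmem⟩ = 0 := by
    intro a b c hmem h2a h2b
    obtain ⟨hab, hbc, hno⟩ := mem_IFin hmem
    have hc3 : 3 ≤ c.1 := by
      rcases Nat.lt_or_ge c.1 3 with h | h
      · exact absurd ⟨h2a, h2b, by omega⟩ hno
      · exact h
    have hz1 : z1 ∉ ({z0, z2, c} : Finset (Fin (m+4))) :=
      nm3 (by rw [z1v, z0v]; omega) (by rw [z1v, z2v]; omega) (by rw [z1v]; omega)
    have hz0m : z0 ∈ ({z0, z2, c} : Finset (Fin (m+4))) := by simp
    have hs3 : ({z0, z2, c} : Finset (Fin (m+4))).card = 3 :=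
      ct (by rw [z0v, z2v]; omega) (by rw [z0v]; omega) (by rw [z2v]; omega)
    have key := coord {z0, z2, c}
    rw [Finset.sum_eq_single (⟨(a, b, c), hmem⟩ : ↥(IFin m))] at key
    · rw [q3_3 (by omega) (by omega),
        fv_one5' (cne (by rw [hs3, cp (by rw [z0v]; omega)]; omega))
          (zne (by simp) hz1) (zne (by simp) hz1) (zne (by simp) hz1)
          (t2 z0 z2 c) (zne (by simp) hz1),
        mul_one] at key
      exact key
    · rintro ⟨⟨a', b', c'⟩, hmem'⟩ - hne
      obtain ⟨hab', hbc', hno'⟩ := mem_IFin hmem'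
      by_cases ha' : a'.1 = 0
      · by_cases hb' : b'.1 = 1
        · have hc3' : 3 ≤ c'.1 := by
            rcases Nat.lt_or_ge c'.1 3 with h | h
            · exact absurd ⟨ha', hb', by omega⟩ hno'
            · exact h
          by_cases h5 : ({z0, z2, c} : Finset (Fin (m+4))) = {z0, c', z2}
          · have h' := insert_z0_inj (nm2 (by rw [z0v, z2v]; omega) (by rw [z0v]; omega))
              (nm2 (by rw [z0v]; omega) (by rw [z0v, z2v]; omega)) h5
            rw [Finset.pair_comm c' z2] at h'
            obtain ⟨-, rfl⟩ := pair_eq_sorted (Fin.lt_def.mpr (by rw [z2v]; omega))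
              (Fin.lt_def.mpr (by rw [z2v]; omega)) h'
            have e1 : b' = b := Fin.val_injective (by omega)
            have e2 : a' = a := Fin.val_injective (by omega)
            subst e1; subst e2
            exact absurd (Subtype.ext rfl) hne
          · rw [q3_3 ha' hb', fv_zero' (cne (by rw [hs3, cp (by rw [z0v]; omega)]; omega))
              (zne (by simp) hz1) (zne (by simp) hz1) (zne (by simp) hz1) h5
              (zne (by simp) hz1), mul_zero]
        · by_cases h5 : ({z0, z2, c} : Finset (Fin (m+4))) = {z0, b', c'}
          · have h' := insert_z0_inj (nm2 (by rw [z0v, z2v]; omega) (by rw [z0v]; omega))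
              (nm2 (by rw [z0v]; omega) (by rw [z0v]; omega)) h5
            obtain ⟨e1, rfl⟩ := pair_eq_sorted (Fin.lt_def.mpr (by rw [z2v]; omega))
              (Fin.lt_def.mpr hbc') h'
            rw [E4 a' b' c hmem' ha'
              (by have := congrArg Fin.val e1; rw [z2v] at this; omega), zero_mul]
          · rw [q3_2 ha' hb', fv_zero' (cne (by rw [hs3, cp (by rw [z0v]; omega)]; omega))
              (zne (by simp) hz1) (zne (by simp) hz1) (zne (by simp) hz1) h5
              (zne (by simp) hz1), mul_zero]
      · by_cases h3 : ({z0, z2, c} : Finset (Fin (m+4))) = {z0, b', a'}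
        · have h' := insert_z0_inj (nm2 (by rw [z0v, z2v]; omega) (by rw [z0v]; omega))
            (nm2 (by rw [z0v]; omega) (by rw [z0v]; omega)) h3
          rw [Finset.pair_comm b' a'] at h'
          obtain ⟨e1, rfl⟩ := pair_eq_sorted (Fin.lt_def.mpr (by rw [z2v]; omega))
            (Fin.lt_def.mpr hab') h'
          rw [E1 a' c c' hmem'
            (by have := congrArg Fin.val e1; rw [z2v] at this; omega), zero_mul]
        · by_cases h4 : ({z0, z2, c} : Finset (Fin (m+4))) = {z0, b', c'}
          · have h' := insert_z0_inj (nm2 (by rw [z0v, z2v]; omega) (by rw [z0v]; omega))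
              (nm2 (by rw [z0v]; omega) (by rw [z0v]; omega)) h4
            obtain ⟨e1, rfl⟩ := pair_eq_sorted (Fin.lt_def.mpr (by rw [z2v]; omega))
              (Fin.lt_def.mpr hbc') h'
            have hb2 : b'.1 = 2 := by have := congrArg Fin.val e1; rw [z2v] at this; omega
            rw [E2 a' b' c hmem' (by omega), zero_mul]
          · by_cases h5 : ({z0, z2, c} : Finset (Fin (m+4))) = {z0, a', c'}
            · have h' := insert_z0_inj (nm2 (by rw [z0v, z2v]; omega) (by rw [z0v]; omega))
                (nm2 (by rw [z0v]; omega) (by rw [z0v]; omega)) h5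
              obtain ⟨e1, rfl⟩ := pair_eq_sorted (Fin.lt_def.mpr (by rw [z2v]; omega))
                (Fin.lt_def.mpr (show a'.1 < c'.1 by omega)) h'
              rw [E1 a' b' c hmem'
                (by have := congrArg Fin.val e1; rw [z2v] at this; omega), zero_mul]
            · rw [q3_1 ha', fv_zero' (cne (by rw [hs3, cp (by rw [z0v]; omega)]; omega))
                (znem hz0m (nm2 (by rw [z0v]; omega) (by rw [z0v]; omega)))
                h3 h4 h5
                (znem hz0m (nm3 (by rw [z0v]; omega) (by rw [z0v]; omega)
                  (by rw [z0v]; omega))), mul_zero]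
    · intro h; exact absurd (Finset.mem_univ _) h
  intro t
  obtain ⟨⟨a, b, c⟩, hmem⟩ := t
  obtain ⟨hab, hbc, hno⟩ := mem_IFin hmem
  rcases Nat.lt_or_ge a.1 1 with h | h
  · by_cases hb1 : b.1 = 1
    · exact E5 a b c hmem (by omega) hb1
    · by_cases hb2 : b.1 = 2
      · exact E4 a b c hmem (by omega) hb2
      · exact E3 a b c hmem (by omega) (by omega)
  · rcases Nat.lt_or_ge a.1 2 with h' | h'
    · exact E2 a b c hmem (by omega)
    · exact E1 a b c hmem h'


lemma exists_sorted_of_card3 {s : Finset (Fin (m+4))} (h : s.card = 3) :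
    ∃ a b c : Fin (m+4), a < b ∧ b < c ∧ s = {a, b, c} := by
  obtain ⟨x, y, z, hxy, hxz, hyz, rfl⟩ := Finset.card_eq_three.mp h
  rcases lt_trichotomy x y with h1 | h1 | h1
  · rcases lt_trichotomy y z with h2 | h2 | h2
    · exact ⟨x, y, z, h1, h2, rfl⟩
    · exact absurd h2 hyz
    · rcases lt_trichotomy x z with h3 | h3 | h3
      · exact ⟨x, z, y, h3, h2, t2 x y z⟩
      · exact absurd h3 hxz
      · exact ⟨z, x, y, h3, h1, by rw [t2 x y z, t1 x z y]⟩
  · exact absurd h1 hxy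
  · rcases lt_trichotomy x z with h2 | h2 | h2
    · exact ⟨y, x, z, h1, h2, t1 x y z⟩
    · exact absurd h2 hxz
    · rcases lt_trichotomy y z with h3 | h3 | h3
      · exact ⟨y, z, x, h3, h2, by rw [t1 x y z, t2 y x z]⟩
      · exact absurd h3 hyz
      · exact ⟨z, y, x, h3, h1, by rw [t1 x y z, t2 y x z, t1 y z x]⟩

lemma IFin_card : (IFin m).card = (m+4).choose 3 - 1 := by
  have hz01 : (z0 : Fin (m+4)).1 < (z1 : Fin (m+4)).1 := by rw [z0v, z1v]; omega
  have hz12 : (z1 : Fin (m+4)).1 < (z2 : Fin (m+4)).1 := by rw [z1v, z2v]; omega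
  have hmemT : ({z0, z1, z2} : Finset (Fin (m+4))) ∈ Finset.univ.powersetCard 3 :=
    Finset.mem_powersetCard.mpr ⟨Finset.subset_univ _,
      ct (by rw [z0v, z1v]; omega) (by rw [z0v, z2v]; omega) (by rw [z1v, z2v]; omega)⟩
  have key : (IFin m).card =
      ((Finset.univ.powersetCard 3).erase ({z0, z1, z2} : Finset (Fin (m+4)))).card := by
    apply Finset.card_bij (fun t _ => ({t.1, t.2.1, t.2.2} : Finset (Fin (m+4))))
    · rintro ⟨a, b, c⟩ ha
      obtain ⟨hab, hbc, hno⟩ := mem_IFin ha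
      dsimp only
      refine Finset.mem_erase.mpr ⟨?_, Finset.mem_powersetCard.mpr ⟨Finset.subset_univ _,
        ct (by omega) (by omega) (by omega)⟩⟩
      intro hEq
      obtain ⟨e1, e2, e3⟩ := triple_eq_sorted (Fin.lt_def.mpr hab) (Fin.lt_def.mpr hbc)
        (Fin.lt_def.mpr hz01) (Fin.lt_def.mpr hz12) hEq
      exact hno ⟨by rw [e1]; rfl, by rw [e2]; rfl, by rw [e3]; rfl⟩
    · rintro ⟨a, b, c⟩ ha ⟨a', b', c'⟩ ha' hEq
      dsimp only at hEq
      obtain ⟨hab, hbc, -⟩ := mem_IFin ha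
      obtain ⟨hab', hbc', -⟩ := mem_IFin ha'
      obtain ⟨e1, e2, e3⟩ := triple_eq_sorted (Fin.lt_def.mpr hab) (Fin.lt_def.mpr hbc)
        (Fin.lt_def.mpr hab') (Fin.lt_def.mpr hbc') hEq
      rw [e1, e2, e3]
    · intro s hs
      obtain ⟨hne, hmem⟩ := Finset.mem_erase.mp hs
      obtain ⟨-, hcard⟩ := Finset.mem_powersetCard.mp hmem
      obtain ⟨a, b, c, hab, hbc, rfl⟩ := exists_sorted_of_card3 hcard
      have habv : a.1 < b.1 := hab
      have hbcv : b.1 < c.1 := hbc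
      refine ⟨(a, b, c), ?_, rfl⟩
      simp only [IFin, Finset.mem_filter, Finset.mem_univ, true_and]
      refine ⟨hab, hbc, ?_⟩
      rintro ⟨e1, e2, e3⟩
      exact hne (by rw [show a = z0 from Fin.val_injective (by rw [z0v]; omega),
        show b = z1 from Fin.val_injective (by rw [z1v]; omega),
        show c = z2 from Fin.val_injective (by rw [z2v]; omega)])
  rw [key, Finset.card_erase_of_mem hmemT, Finset.card_powersetCard, Finset.card_univ,
    Fintype.card_fin]


lemma relator_one {r : FreeGroup (Quad n)} (hr : r ∈ gammaRels n) :
    PresentedGroup.mk (gammaRels n) r = 1 :=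
  (QuotientGroup.eq_one_iff r).mpr (Subgroup.subset_normalClosure hr)

lemma gg_one {q : Quad n} (h : ¬ qDistinct q) : gg q = 1 :=
  relator_one (Or.inl (Or.inl (Or.inl (Or.inl ⟨q, h, rfl⟩))))

lemma gg_sq {q : Quad n} (h : qDistinct q) : gg q * gg q = 1 := by
  have := relator_one (n := n) (Or.inl (Or.inl (Or.inl (Or.inr ⟨q, h, rfl⟩))))
  rw [map_mul] at this
  exact this

lemma ggR {i j k l : Fin n} (h : qDistinct (i, j, k, l)) :
    gg (i, j, k, l) = gg (j, k, l, i) := by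
  have := relator_one (n := n) (Or.inr ⟨i, j, k, l, h, Or.inl rfl⟩)
  rw [map_mul, map_inv] at this
  exact mul_inv_eq_one.mp this

lemma ggV {i j k l : Fin n} (h : qDistinct (i, j, k, l)) :
    gg (i, j, k, l) = gg (l, k, j, i) := by
  have := relator_one (n := n) (Or.inr ⟨i, j, k, l, h, Or.inr rfl⟩)
  rw [map_mul, map_inv] at this
  exact mul_inv_eq_one.mp this

lemma gg_pent {i j k l m : Fin n} (h : ({i, j, k, l, m} : Finset (Fin n)).card = 5) :
    gg (i, j, k, l) * gg (i, j, l, m) * gg (j, k, l, m) * gg (i, j, k, m) * gg (i, k, l, m)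
      = 1 := by
  have := relator_one (n := n) (Or.inl (Or.inr ⟨i, j, k, l, m, h, rfl⟩))
  simp only [map_mul] at this
  exact this

/- derived dihedral moves -/
lemma gg_rot2 {i j k l : Fin n} (h : qDistinct (i, j, k, l)) :
    gg (i, j, k, l) = gg (k, l, i, j) := by
  rw [ggR h, ggR (qDistinct_rot h)]

lemma gg_rot3 {i j k l : Fin n} (h : qDistinct (i, j, k, l)) :
    gg (i, j, k, l) = gg (l, i, j, k) := by
  rw [gg_rot2 h, ggR (qDistinct_rot (qDistinct_rot h))]

lemma gg_swap13 {i j k l : Fin n} (h : qDistinct (i, j, k, l)) :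
    gg (i, j, k, l) = gg (k, j, i, l) := by
  rw [gg_rot3 h, ggV (qDistinct_rot (qDistinct_rot (qDistinct_rot h)))]

lemma gg_jilk {i j k l : Fin n} (h : qDistinct (i, j, k, l)) :
    gg (i, j, k, l) = gg (j, i, l, k) := by
  rw [gg_rot2 h, ggV (qDistinct_rot (qDistinct_rot h))]

lemma gg_ilkj {i j k l : Fin n} (h : qDistinct (i, j, k, l)) :
    gg (i, j, k, l) = gg (i, l, k, j) := by
  rw [ggR h, ggV (qDistinct_rot h)]

/- solving a pentagon for its 2nd or 3rd factor -/
lemma mem_of_five2 {H : Subgroup (Gamma n)} {a b c d e : Gamma n}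
    (h : a * b * c * d * e = 1) (ha : a ∈ H) (hc : c ∈ H) (hd : d ∈ H) (he : e ∈ H) :
    b ∈ H := by
  have h2 : a * (a⁻¹ * e⁻¹ * d⁻¹ * c⁻¹) * c * d * e = 1 := by group
  have h3 := mul_right_cancel (mul_right_cancel (mul_right_cancel (h.trans h2.symm)))
  have h4 := mul_left_cancel h3
  rw [h4]
  exact Subgroup.mul_mem _ (Subgroup.mul_mem _ (Subgroup.mul_mem _ (Subgroup.inv_mem _ ha)
    (Subgroup.inv_mem _ he)) (Subgroup.inv_mem _ hd)) (Subgroup.inv_mem _ hc)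

lemma mem_of_five3 {H : Subgroup (Gamma n)} {a b c d e : Gamma n}
    (h : a * b * c * d * e = 1) (ha : a ∈ H) (hb : b ∈ H) (hd : d ∈ H) (he : e ∈ H) :
    c ∈ H := by
  have h2 : a * b * (b⁻¹ * a⁻¹ * e⁻¹ * d⁻¹) * d * e = 1 := by group
  have h3 := mul_right_cancel (mul_right_cancel (h.trans h2.symm))
  have h4 := mul_left_cancel h3
  rw [h4]
  exact Subgroup.mul_mem _ (Subgroup.mul_mem _ (Subgroup.mul_mem _ (Subgroup.inv_mem _ hb)
    (Subgroup.inv_mem _ ha)) (Subgroup.inv_mem _ he)) (Subgroup.inv_mem _ hd)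



lemma qDistinct_of_vals {a b c d : Fin (m+4)} (h1 : a.1 ≠ b.1) (h2 : a.1 ≠ c.1)
    (h3 : a.1 ≠ d.1) (h4 : b.1 ≠ c.1) (h5 : b.1 ≠ d.1) (h6 : c.1 ≠ d.1) :
    qDistinct (a, b, c, d) :=
  (qDistinct_iff a b c d).mpr ⟨fne h1, fne h2, fne h3, fne h4, fne h5, fne h6⟩

lemma mem_IFin_of {a b c : Fin (m+4)} (h1 : a.1 < b.1) (h2 : b.1 < c.1)
    (h3 : ¬(a.1 = 0 ∧ b.1 = 1 ∧ c.1 = 2)) : (a, b, c) ∈ IFin m := by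
  simp only [IFin, Finset.mem_filter, Finset.mem_univ, true_and]
  exact ⟨h1, h2, h3⟩

def SGen (m : ℕ) : Set (Gamma (m+4)) := Set.range (fun t : ↥(IFin m) => gg (q3 t.1))

def HH (m : ℕ) : Subgroup (Gamma (m+4)) := Subgroup.closure (SGen m)

lemma seed_mem {t : Fin (m+4) × Fin (m+4) × Fin (m+4)} (ht : t ∈ IFin m) :
    gg (q3 t) ∈ HH m := Subgroup.subset_closure ⟨⟨t, ht⟩, rfl⟩

lemma gammaCover {z : ℕ} (hz3 : 3 ≤ z) (ζ : Fin (m+4)) (hζ : ζ.1 = z)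
    (IH : ∀ q : Quad (m+4), qDistinct q → (∀ v ∈ qFinset q, v.1 + 1 ≤ z) → gg q ∈ HH m) :
    ∀ x b c : Fin (m+4), x.1 ≠ b.1 → x.1 ≠ c.1 → b.1 ≠ c.1 →
      x.1 < z → b.1 < z → c.1 < z → gg (x, b, ζ, c) ∈ HH m := by
  have entz : ∀ i j k l : Fin (m+4), i.1 < z → j.1 < z → k.1 < z → l.1 < z →
      ∀ v ∈ qFinset (i, j, k, l), v.1 + 1 ≤ z := by
    intro i j k l hi hj hk hl v hv
    simp only [qFinset, Finset.mem_insert, Finset.mem_singleton] at hv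
    rcases hv with rfl | rfl | rfl | rfl <;> omega
  have hdist : ∀ x b c : Fin (m+4), x.1 ≠ b.1 → x.1 ≠ c.1 → b.1 ≠ c.1 →
      x.1 < z → b.1 < z → c.1 < z → qDistinct (x, b, ζ, c) := by
    intro x b c h1 h2 h3 h4 h5 h6
    exact qDistinct_of_vals h1 (by omega) h2 (by omega) (by omega) (by omega)
  have gsym : ∀ x b c : Fin (m+4), x.1 ≠ b.1 → x.1 ≠ c.1 → b.1 ≠ c.1 →
      x.1 < z → b.1 < z → c.1 < z → gg (x, b, ζ, c) = gg (x, c, ζ, b) := by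
    intro x b c h1 h2 h3 h4 h5 h6
    exact gg_ilkj (hdist x b c h1 h2 h3 h4 h5 h6)
  -- pentagon in gamma form
  have pentG : ∀ i j k l : Fin (m+4), i.1 ≠ j.1 → i.1 ≠ k.1 → i.1 ≠ l.1 → j.1 ≠ k.1 →
      j.1 ≠ l.1 → k.1 ≠ l.1 → i.1 < z → j.1 < z → k.1 < z → l.1 < z →
      gg (i, j, k, l) * gg (j, i, ζ, l) * gg (k, j, ζ, l) * gg (j, i, ζ, k) *
        gg (k, i, ζ, l) = 1 := by
    intro i j k l d1 d2 d3 d4 d5 d6 e1 e2 e3 e4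
    have hp := gg_pent ((card5_iff i j k l ζ).mpr ⟨fne d1, fne d2, fne d3, fne (by omega),
      fne d4, fne d5, fne (by omega), fne d6, fne (by omega), fne (by omega)⟩)
    rw [gg_jilk (i := i) (j := j) (k := l) (l := ζ)
        (qDistinct_of_vals d1 d3 (by omega) d5 (by omega) (by omega)),
      gg_jilk (i := j) (j := k) (k := l) (l := ζ)
        (qDistinct_of_vals d4 d5 (by omega) d6 (by omega) (by omega)),
      gg_jilk (i := i) (j := j) (k := k) (l := ζ)
        (qDistinct_of_vals d1 d2 (by omega) d4 (by omega) (by omega)),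
      gg_jilk (i := i) (j := k) (k := l) (l := ζ)
        (qDistinct_of_vals d2 d3 (by omega) d6 (by omega) (by omega))] at hp
    exact hp
  have RelA : ∀ i j k l : Fin (m+4), i.1 ≠ j.1 → i.1 ≠ k.1 → i.1 ≠ l.1 → j.1 ≠ k.1 →
      j.1 ≠ l.1 → k.1 ≠ l.1 → i.1 < z → j.1 < z → k.1 < z → l.1 < z →
      gg (j, i, ζ, k) ∈ HH m → gg (k, j, ζ, l) ∈ HH m → gg (k, i, ζ, l) ∈ HH m →
      gg (j, i, ζ, l) ∈ HH m := by
    intro i j k l d1 d2 d3 d4 d5 d6 e1 e2 e3 e4 m1 m2 m3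
    exact mem_of_five2 (pentG i j k l d1 d2 d3 d4 d5 d6 e1 e2 e3 e4)
      (IH _ (qDistinct_of_vals d1 d2 d3 d4 d5 d6) (entz i j k l e1 e2 e3 e4)) m2 m1 m3
  have RelB : ∀ i j k l : Fin (m+4), i.1 ≠ j.1 → i.1 ≠ k.1 → i.1 ≠ l.1 → j.1 ≠ k.1 →
      j.1 ≠ l.1 → k.1 ≠ l.1 → i.1 < z → j.1 < z → k.1 < z → l.1 < z →
      gg (j, i, ζ, l) ∈ HH m → gg (j, i, ζ, k) ∈ HH m → gg (k, i, ζ, l) ∈ HH m →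
      gg (k, j, ζ, l) ∈ HH m := by
    intro i j k l d1 d2 d3 d4 d5 d6 e1 e2 e3 e4 m1 m2 m3
    exact mem_of_five3 (pentG i j k l d1 d2 d3 d4 d5 d6 e1 e2 e3 e4)
      (IH _ (qDistinct_of_vals d1 d2 d3 d4 d5 d6) (entz i j k l e1 e2 e3 e4)) m1 m2 m3
  -- seeds
  have S1 : ∀ a b : Fin (m+4), 1 ≤ a.1 → a.1 < b.1 → b.1 < z → gg (b, z0, ζ, a) ∈ HH m := by
    intro a b h1 h2 h3
    have hs := seed_mem (mem_IFin_of (c := ζ) h2 (by omega) (by omega))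
    rw [q3_1 (by omega)] at hs
    rwa [gg_jilk (qDistinct_of_vals (by rw [z0v]; omega) (by rw [z0v]; omega)
      (by rw [z0v]; omega) (by omega) (by omega) (by omega))] at hs
  have S2 : ∀ b : Fin (m+4), 2 ≤ b.1 → b.1 < z → gg (z1, z0, ζ, b) ∈ HH m := by
    intro b h1 h2
    have hs := seed_mem (mem_IFin_of (a := z0) (c := ζ)
      (show (z0 : Fin (m+4)).1 < b.1 by rw [z0v]; omega) (by omega) (by rw [z0v]; omega))
    rw [q3_2 (by rw [z0v]) (by omega)] at hs
    rwa [gg_jilk (qDistinct_of_vals (by rw [z0v, z1v]; omega) (by rw [z0v]; omega)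
      (by rw [z0v]; omega) (by rw [z1v]; omega) (by rw [z1v]; omega) (by omega))] at hs
  have S3 : gg (z0, z1, ζ, z2) ∈ HH m := by
    have hs := seed_mem (mem_IFin_of (c := ζ) (show (z0 : Fin (m+4)).1 < (z1 : Fin (m+4)).1
      by rw [z0v, z1v]; omega) (by rw [z1v]; omega) (by rw [z0v, z1v]; omega))
    rwa [q3_3 (by rw [z0v]) (by rw [z1v])] at hs
  have hz0z : (z0 : Fin (m+4)).1 < z := by rw [z0v]; omega
  have hz1z : (z1 : Fin (m+4)).1 < z := by rw [z1v]; omega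
  have hz2z : (z2 : Fin (m+4)).1 < z := by rw [z2v]; omega
  -- G4 : gg (z1, b, ζ, a) for 2 ≤ a < b < z
  have G4 : ∀ a b : Fin (m+4), 2 ≤ a.1 → a.1 < b.1 → b.1 < z → gg (z1, b, ζ, a) ∈ HH m := by
    intro a b h1 h2 h3
    refine RelB z0 b z1 a (by rw [z0v]; omega) (by rw [z0v, z1v]; omega) (by rw [z0v]; omega)
      (by rw [z1v]; omega) (by omega) (by rw [z1v]; omega) hz0z (by omega) hz1z (by omega)
      (S1 a b (by omega) h2 h3) (S1 z1 b (by rw [z1v]) (by rw [z1v]; omega) h3)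
      (S2 a h1 (by omega))
  -- G5 : gg (j, z0, ζ, l) for 2 ≤ j < l < z
  have G5 : ∀ j l : Fin (m+4), 2 ≤ j.1 → j.1 < l.1 → l.1 < z → gg (j, z0, ζ, l) ∈ HH m := by
    intro j l h1 h2 h3
    refine RelA z0 j z1 l (by rw [z0v]; omega) (by rw [z0v, z1v]; omega) (by rw [z0v]; omega)
      (by rw [z1v]; omega) (by omega) (by rw [z1v]; omega) hz0z (by omega) hz1z (by omega)
      (S1 z1 j (by rw [z1v]) (by rw [z1v]; omega) (by omega)) ?_
      (S2 l (by omega) h3)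
    rw [gsym z1 j l (by rw [z1v]; omega) (by rw [z1v]; omega) (by omega) hz1z (by omega) h3]
    exact G4 j l h1 h2 h3
  -- G6 : gg (x, z0, ζ, a) for distinct x,a ≥ 1
  have G6 : ∀ x a : Fin (m+4), 1 ≤ x.1 → 1 ≤ a.1 → x.1 ≠ a.1 → x.1 < z → a.1 < z →
      gg (x, z0, ζ, a) ∈ HH m := by
    intro x a h1 h2 h3 h4 h5
    rcases Nat.lt_or_ge a.1 x.1 with hlt | hge
    · exact S1 a x (by omega) hlt h4
    · rcases Nat.lt_or_ge x.1 2 with hx1 | hx2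
      · have : x = z1 := Fin.val_injective (by rw [z1v]; omega)
        subst this
        exact S2 a (by omega) h5
      · exact G5 x a hx2 (by omega) h5
  -- G7 : gg (k, j, ζ, l) for distinct j,k,l ≥ 1
  have G7 : ∀ j k l : Fin (m+4), 1 ≤ j.1 → 1 ≤ k.1 → 1 ≤ l.1 → j.1 ≠ k.1 → j.1 ≠ l.1 →
      k.1 ≠ l.1 → j.1 < z → k.1 < z → l.1 < z → gg (k, j, ζ, l) ∈ HH m := by
    intro j k l h1 h2 h3 h4 h5 h6 e1 e2 e3
    refine RelB z0 j k l (by rw [z0v]; omega) (by rw [z0v]; omega) (by rw [z0v]; omega)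
      h4 h5 h6 hz0z e1 e2 e3 (G6 j l h1 h3 h5 e1 e3) (G6 j k h1 h2 h4 e1 e2)
      (G6 k l h2 h3 h6 e2 e3)
  -- G8 : gg (z0, z1, ζ, l) for 3 ≤ l < z
  have G8 : ∀ l : Fin (m+4), 3 ≤ l.1 → l.1 < z → gg (z0, z1, ζ, l) ∈ HH m := by
    intro l h1 h2
    refine RelA z1 z0 z2 l (by rw [z0v, z1v]; omega) (by rw [z1v, z2v]; omega)
      (by rw [z1v]; omega) (by rw [z0v, z2v]; omega) (by rw [z0v]; omega)
      (by rw [z2v]; omega) hz1z hz0z hz2z h2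
      S3 (G6 z2 l (by rw [z2v]; omega) (by omega) (by rw [z2v]; omega) hz2z h2)
      (G7 z1 z2 l (by rw [z1v]) (by rw [z2v]; omega) (by omega) (by rw [z1v, z2v]; omega)
        (by rw [z1v]; omega) (by rw [z2v]; omega) hz1z hz2z h2)
  -- G9 : gg (z0, u, ζ, l) for distinct u,l ≥ 2
  have G9 : ∀ u l : Fin (m+4), 2 ≤ u.1 → 2 ≤ l.1 → u.1 ≠ l.1 → u.1 < z → l.1 < z →
      gg (z0, u, ζ, l) ∈ HH m := by
    intro u l h1 h2 h3 h4 h5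
    refine RelA u z0 z1 l (by rw [z0v]; omega) (by rw [z1v]; omega) (by omega)
      (by rw [z0v, z1v]; omega) (by rw [z0v]; omega) (by rw [z1v]; omega)
      h4 hz0z hz1z h5 ?_ (S2 l h2 h5) (G7 u z1 l (by omega) (by rw [z1v]) (by omega)
        (by rw [z1v]; omega) h3 (by rw [z1v]; omega) h4 hz1z h5)
    rw [gsym z0 u z1 (by rw [z0v]; omega) (by rw [z0v, z1v]; omega) (by rw [z1v]; omega)
      hz0z h4 hz1z]
    rcases Nat.lt_or_ge u.1 3 with hu | hu
    · have : u = z2 := Fin.val_injective (by rw [z2v]; omega)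
      subst this
      exact S3
    · exact G8 u hu h4
  -- final coverage
  intro x b c hxb hxc hbc hxz hbz hcz
  rcases Nat.lt_or_ge x.1 1 with hx0 | hx1
  · -- x = 0
    have hx : x = z0 := Fin.val_injective (by rw [z0v]; omega)
    subst hx
    rcases Nat.lt_or_ge b.1 2 with hb1 | hb2
    · -- b.1 = 1
      have hb : b = z1 := Fin.val_injective (by rw [z1v, z0v] at *; omega)
      subst hb
      rcases Nat.lt_or_ge c.1 3 with hc2 | hc3
      · have hc : c = z2 := Fin.val_injective (by rw [z2v]; rw [z1v, z0v] at *; omega)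
        subst hc
        exact S3
      · exact G8 c hc3 hcz
    · rcases Nat.lt_or_ge c.1 1 with hc0 | hc1
      · exact absurd (show (0:ℕ) = c.1 by omega) (by rw [z0v] at hxc; exact hxc)
      · rcases Nat.lt_or_ge c.1 2 with hc1' | hc2
        · -- c.1 = 1
          rw [gsym z0 b c (by omega) (by omega) hbc hxz hbz hcz]
          rcases Nat.lt_or_ge b.1 3 with hb2' | hb3
          · have hb : b = z2 := Fin.val_injective (by rw [z2v]; omega)
            have hc : c = z1 := Fin.val_injective (by rw [z1v]; omega)
            subst hb; subst hc
            exact S3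
          · have hc : c = z1 := Fin.val_injective (by rw [z1v]; omega)
            subst hc
            exact G8 b hb3 hbz
        · exact G9 b c hb2 hc2 hbc hbz hcz
  · rcases Nat.lt_or_ge b.1 1 with hb0 | hb1
    · -- b = 0
      have hb : b = z0 := Fin.val_injective (by rw [z0v]; omega)
      subst hb
      rcases Nat.lt_or_ge c.1 1 with hc0 | hc1
      · exact absurd (show (0:ℕ) = c.1 by omega) (by rw [z0v] at hbc; exact hbc)
      · exact G6 x c hx1 hc1 hxc hxz hcz
    · rcases Nat.lt_or_ge c.1 1 with hc0 | hc1
      · -- c = 0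
        have hc : c = z0 := Fin.val_injective (by rw [z0v]; omega)
        subst hc
        rw [gsym x b z0 hxb hxc hbc hxz hbz hcz]
        exact G6 x b hx1 hb1 hxb hxz hbz
      · exact G7 b x c hb1 hx1 hc1 (by omega) hbc hxc hbz hxz hcz

lemma main_gen : ∀ z : ℕ, ∀ q : Quad (m+4), qDistinct q →
    (∀ v ∈ qFinset q, v.1 ≤ z) → gg q ∈ HH m := by
  intro z
  induction z using Nat.strong_induction_on with
  | _ z IH =>
  rintro ⟨a, b, c, d⟩ hd hle
  obtain ⟨d1, d2, d3, d4, d5, d6⟩ := (qDistinct_iff a b c d).mp hd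
  have ha := hle a (by simp [qFinset])
  have hb := hle b (by simp [qFinset])
  have hc := hle c (by simp [qFinset])
  have hdd := hle d (by simp [qFinset])
  have v1 := vne d1; have v2 := vne d2; have v3 := vne d3
  have v4 := vne d4; have v5 := vne d5; have v6 := vne d6
  set M := max (max a.1 b.1) (max c.1 d.1) with hM
  rcases Nat.lt_or_ge M z with hlt | hge
  · exact IH M hlt (a, b, c, d) hd (by
      intro v hv
      simp only [qFinset, Finset.mem_insert, Finset.mem_singleton] at hv
      rcases hv with rfl | rfl | rfl | rfl <;> omega)
  · have hMz : M = z := by omega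
    have hz3 : 3 ≤ z := by omega
    have IH' : ∀ q : Quad (m+4), qDistinct q → (∀ v ∈ qFinset q, v.1 + 1 ≤ z) →
        gg q ∈ HH m := by
      intro q hq hle'
      exact IH (z-1) (by omega) q hq (fun v hv => by have := hle' v hv; omega)
    rcases (by omega : a.1 = z ∨ b.1 = z ∨ c.1 = z ∨ d.1 = z) with hp | hp | hp | hp
    · rw [gg_swap13 hd]
      exact gammaCover hz3 a hp IH' c b d (by omega) (by omega) (by omega)
        (by omega) (by omega) (by omega)
    · rw [gg_rot3 hd]
      exact gammaCover hz3 b hp IH' d a c (by omega) (by omega) (by omega)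
        (by omega) (by omega) (by omega)
    · exact gammaCover hz3 c hp IH' a b d (by omega) (by omega) (by omega)
        (by omega) (by omega) (by omega)
    · rw [ggR hd]
      exact gammaCover hz3 d hp IH' b c a (by omega) (by omega) (by omega)
        (by omega) (by omega) (by omega)

lemma closure_SGen : Subgroup.closure (SGen m) = ⊤ := by
  rw [eq_top_iff]
  intro x _
  refine PresentedGroup.generated_by _ (HH m) (fun q => ?_) x
  by_cases hq : qDistinct q
  · exact main_gen (m + 3) q hq (fun v _ => by have := v.isLt; omega)
  · show gg q ∈ HH m
    rw [gg_one hq]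
    exact Subgroup.one_mem _


lemma q3_distinct {t : Fin (m+4) × Fin (m+4) × Fin (m+4)} (ht : t ∈ IFin m) :
    qDistinct (q3 t) := by
  obtain ⟨a, b, c⟩ := t
  obtain ⟨hab, hbc, hno⟩ := mem_IFin ht
  by_cases ha : a.1 = 0
  · by_cases hb : b.1 = 1
    · have hc3 : 3 ≤ c.1 := by
        rcases Nat.lt_or_ge c.1 3 with h | h
        · exact absurd ⟨ha, hb, by omega⟩ hno
        · exact h
      rw [q3_3 ha hb]
      exact qDistinct_of_vals (by rw [z0v, z1v]; omega) (by rw [z0v]; omega)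
        (by rw [z0v, z2v]; omega) (by rw [z1v]; omega) (by rw [z1v, z2v]; omega)
        (by rw [z2v]; omega)
    · rw [q3_2 ha hb]
      exact qDistinct_of_vals (by rw [z0v, z1v]; omega) (by rw [z0v]; omega)
        (by rw [z0v]; omega) (by rw [z1v]; omega) (by rw [z1v]; omega) (by omega)
  · rw [q3_1 ha]
    exact qDistinct_of_vals (by rw [z0v]; omega) (by rw [z0v]; omega) (by rw [z0v]; omega)
      (by omega) (by omega) (by omega)

lemma phi_q3 {t : Fin (m+4) × Fin (m+4) × Fin (m+4)} (ht : t ∈ IFin m) :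
    phi (gg (q3 t)) = Multiplicative.ofAdd (fv (q3 t)) := by
  rw [phi_gg]
  unfold fMap
  rw [if_pos (q3_distinct ht)]

lemma ggq3_injective : Function.Injective (fun t : ↥(IFin m) => gg (q3 t.1)) := by
  haveI : Fact (Nat.Prime 2) := ⟨Nat.prime_two⟩
  intro t t' h
  have h2 : vfam t = vfam t' := by
    have h1 := congrArg (phi (n := m + 4)) h
    rw [phi_q3 t.2, phi_q3 t'.2] at h1
    exact Multiplicative.ofAdd.injective h1
  exact vfam_indep.injective h2

end GammaProof

open GammaProof in
/-- For every `n ≥ 4`, every generating set of `Γ_n^4` has at least `N_n = C(n,3) - 1`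
elements (an infinite generating set certainly does, so it suffices to consider finite ones);
consequently, since some generating set with exactly `N_n` elements exists, the minimum
number of generators of `Γ_n^4` is exactly `N_n`. -/
theorem gamma_min_generators (n : ℕ) (hn : 4 ≤ n) :
    (∀ S : Set (Gamma n), S.Finite → Subgroup.closure S = ⊤ →
      n.choose 3 - 1 ≤ S.ncard) ∧
    (∃ S : Set (Gamma n), S.Finite ∧ Subgroup.closure S = ⊤ ∧
      S.ncard = n.choose 3 - 1) := by
  haveI : Fact (Nat.Prime 2) := ⟨Nat.prime_two⟩
  obtain ⟨m, rfl⟩ : ∃ m, n = m + 4 := ⟨n - 4, by omega⟩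
  constructor
  · intro S hS hclo
    classical
    set T : Set (G (m+4)) := (fun x => Multiplicative.toAdd (phi (n := m+4) x)) '' S with hT
    have hTfin : T.Finite := hS.image _
    haveI := hTfin.fintype
    have hspan : ∀ y ∈ Subgroup.closure S,
        Multiplicative.toAdd (phi (n := m+4) y) ∈ Submodule.span (ZMod 2) T := by
      intro y hy
      induction hy using Subgroup.closure_induction with
      | mem x hxS => exact Submodule.subset_span ⟨x, hxS, rfl⟩
      | one => simp only [map_one, toAdd_one]; exact Submodule.zero_mem _
      | mul a b ha hb iha ihb =>
          simp only [map_mul, toAdd_mul]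
          exact Submodule.add_mem _ iha ihb
      | inv a ha iha =>
          simp only [map_inv, toAdd_inv]
          exact Submodule.neg_mem _ iha
    have hmem : ∀ t : ↥(IFin m), vfam t ∈ Submodule.span (ZMod 2) T := by
      intro t
      have h1 := hspan (gg (q3 t.1)) (by rw [hclo]; exact Subgroup.mem_top _)
      rwa [phi_q3 t.2, toAdd_ofAdd] at h1
    haveI : Module.Finite (ZMod 2) (Submodule.span (ZMod 2) T) :=
      FiniteDimensional.span_of_finite _ hTfin
    have hli : LinearIndependent (ZMod 2)
        (fun t : ↥(IFin m) => (⟨vfam t, hmem t⟩ : Submodule.span (ZMod 2) T)) := by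
      apply LinearIndependent.of_comp (Submodule.span (ZMod 2) T).subtype
      exact vfam_indep
    have h3 := hli.fintype_card_le_finrank
    have h4 := finrank_span_le_card (R := ZMod 2) T
    calc (m+4).choose 3 - 1 = (IFin m).card := IFin_card.symm
      _ = Fintype.card ↥(IFin m) := (Fintype.card_coe _).symm
      _ ≤ Module.finrank (ZMod 2) (Submodule.span (ZMod 2) T) := h3
      _ ≤ T.toFinset.card := h4
      _ = T.ncard := (Set.ncard_eq_toFinset_card' T).symm
      _ ≤ S.ncard := Set.ncard_image_le hS
  · refine ⟨SGen m, Set.finite_range _, closure_SGen, ?_⟩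
    rw [SGen, ← Set.image_univ, Set.ncard_image_of_injective _ ggq3_injective,
      Set.ncard_univ, Nat.card_eq_fintype_card, Fintype.card_coe, IFin_card]
end
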